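/- arXiv:1809.10953 — 9 statements merged into one kernel-verified Lean document; each statement's English description precedes it below -/
import Mathlib

section
/- Let E be a Polish space (with Borel σ-algebra), let V : E → ℝ be measurable with V(x) ≥ 1 for all x, and let μ₁, μ₂ be Borel probability measures on E with ∫ V dμ₁ < ∞ and ∫ V dμ₂ < ∞. Then ‖μ₁ − μ₂‖_V = inf { ∫_{E×E} d_V(x,y) dν(x,y) : ν a coupling of μ₁ and μ₂ }, and the infimum is attained by some coupling. -/
open MeasureTheory
open scoped ENNReal

/-- The `V`-norm `‖μ₁ - μ₂‖_V = |μ₁ - μ₂|(V)`, where `|μ₁ - μ₂|` is the total variation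
measure of the signed measure `μ₁ - μ₂`. -/
noncomputable def Vnorm {E : Type*} [MeasurableSpace E] (μ₁ μ₂ : Measure E)
    [IsFiniteMeasure μ₁] [IsFiniteMeasure μ₂] (V : E → ℝ) : ℝ≥0∞ :=
  ∫⁻ x, ENNReal.ofReal (V x) ∂((μ₁.toSignedMeasure - μ₂.toSignedMeasure).totalVariation)

/-- `ν` is a coupling of `μ₁` and `μ₂`. -/
def IsCoupling {E : Type*} [MeasurableSpace E] (ν : Measure (E × E)) (μ₁ μ₂ : Measure E) : Prop :=
  ν.map Prod.fst = μ₁ ∧ ν.map Prod.snd = μ₂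

/-- The cost function `d_V(x,y) = 𝟙_{x ≠ y} (V x + V y)`. -/
noncomputable def dVcost {E : Type*} (V : E → ℝ) (p : E × E) : ℝ≥0∞ :=
  {q : E × E | q.1 ≠ q.2}.indicator
    (fun q => ENNReal.ofReal (V q.1) + ENNReal.ofReal (V q.2)) p

/-!
Write `μ₁ - μ₂ = π⁺ - π⁻` for the Jordan decomposition. If `ν` is a coupling, the marginals `α`, `β`
of its off-diagonal part satisfy `μ₁ - μ₂ = α - β` (the diagonal part has equal marginals), so
minimality of the Jordan decomposition gives `π⁺ ≤ α`, `π⁻ ≤ β`, whence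
`∫ d_V dν = α(V) + β(V) ≥ π⁺(V) + π⁻(V) = ‖μ₁ - μ₂‖_V`. Equality is attained by putting the common
part `μ₁ - π⁺ = μ₂ - π⁻` on the diagonal and coupling `π⁺`, `π⁻` independently: being mutually
singular, their product does not charge the diagonal.
-/

open Set

namespace MeasureTheory.SignedMeasure

variable {X : Type*} [MeasurableSpace X] (μ ν : Measure X) [IsFiniteMeasure μ] [IsFiniteMeasure ν]

theorem toJordanDecomposition_sub_posPart_le :
    (μ.toSignedMeasure - ν.toSignedMeasure).toJordanDecomposition.posPart ≤ μ := by
  set j := (μ.toSignedMeasure - ν.toSignedMeasure).toJordanDecomposition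
  obtain ⟨u, hu, hpu, hnu⟩ := j.mutuallySingular
  refine Measure.le_iff.2 fun B hB => ?_
  have hBu : MeasurableSet (B \ u) := hB.diff hu
  have hn : j.negPart.real (B \ u) = 0 := by
    simp [measureReal_def, measure_mono_null (fun _ (hx : _ ∈ B \ u) => hx.2) hnu]
  have hp : j.posPart.real (B \ u) = μ.real (B \ u) - ν.real (B \ u) := by
    have := apply_eq_posPart_real_sub_negPart_real (μ.toSignedMeasure - ν.toSignedMeasure) hBu
    rw [Measure.toSignedMeasure_sub_apply hBu, hn] at this
    linarith
  calc j.posPart B = j.posPart (B \ u) := (measure_sdiff_null hpu).symm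
    _ ≤ μ (B \ u) := by
      rw [← ENNReal.toReal_le_toReal (measure_ne_top _ _) (measure_ne_top _ _)]
      simp only [← measureReal_def] at hp ⊢
      linarith [measureReal_nonneg (μ := ν) (s := B \ u)]
    _ ≤ μ B := measure_mono sdiff_subset

theorem toJordanDecomposition_sub_negPart_le :
    (μ.toSignedMeasure - ν.toSignedMeasure).toJordanDecomposition.negPart ≤ ν := by
  rw [← JordanDecomposition.neg_posPart, ← toJordanDecomposition_neg, neg_sub]
  exact toJordanDecomposition_sub_posPart_le ν μ

theorem add_toJordanDecomposition_sub_negPart :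
    μ + (μ.toSignedMeasure - ν.toSignedMeasure).toJordanDecomposition.negPart =
      ν + (μ.toSignedMeasure - ν.toSignedMeasure).toJordanDecomposition.posPart := by
  refine Measure.toSignedMeasure_eq_toSignedMeasure_iff.1 ?_
  rw [Measure.toSignedMeasure_add μ, Measure.toSignedMeasure_add ν, ← sub_eq_sub_iff_add_eq_add,
    sub_eq_sub_iff_sub_eq_sub]
  exact (toSignedMeasure_toJordanDecomposition (μ.toSignedMeasure - ν.toSignedMeasure)).symm

theorem sub_toJordanDecomposition_sub_posPart_add_negPart :
    μ - (μ.toSignedMeasure - ν.toSignedMeasure).toJordanDecomposition.posPart +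
      (μ.toSignedMeasure - ν.toSignedMeasure).toJordanDecomposition.negPart = ν := by
  set j := (μ.toSignedMeasure - ν.toSignedMeasure).toJordanDecomposition
  have hle := toJordanDecomposition_sub_posPart_le μ ν
  ext B hB
  refine (ENNReal.add_left_inj (measure_ne_top j.posPart B)).1 ?_
  rw [Measure.add_apply, add_right_comm, ← Measure.add_apply, Measure.sub_add_cancel_of_le hle,
    ← Measure.add_apply, add_toJordanDecomposition_sub_negPart, Measure.add_apply]

end MeasureTheory.SignedMeasure

theorem MeasureTheory.Measure.MutuallySingular.ae_prod_ne {X : Type*} [MeasurableSpace X]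
    {μ ν : Measure X} [SFinite ν] (h : μ ⟂ₘ ν) : ∀ᵐ q ∂μ.prod ν, q.1 ≠ q.2 := by
  obtain ⟨u, -, hμu, hνu⟩ := h
  refine measure_mono_null (t := u ×ˢ univ ∪ univ ×ˢ uᶜ) (fun q hq => ?_) ?_
  · have hq : q.1 = q.2 := not_not.1 hq
    by_cases hq1 : q.1 ∈ u
    · exact Or.inl ⟨hq1, trivial⟩
    · exact Or.inr ⟨trivial, hq ▸ hq1⟩
  · exact measure_union_null (by simp [Measure.prod_prod, hμu]) (by simp [Measure.prod_prod, hνu])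

section Coupling

variable {X : Type*} [MeasurableSpace X]

theorem IsCoupling.isProbabilityMeasure {ν : Measure (X × X)} {μ₁ μ₂ : Measure X}
    [IsProbabilityMeasure μ₁] (h : IsCoupling ν μ₁ μ₂) : IsProbabilityMeasure ν :=
  (Measure.isProbabilityMeasure_map_iff measurable_fst.aemeasurable).1 (h.1 ▸ inferInstance)

theorem IsCoupling.add {ν ν' : Measure (X × X)} {μ₁ μ₂ μ₁' μ₂' : Measure X}
    (h : IsCoupling ν μ₁ μ₂) (h' : IsCoupling ν' μ₁' μ₂') :
    IsCoupling (ν + ν') (μ₁ + μ₁') (μ₂ + μ₂') :=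
  ⟨by rw [Measure.map_add _ _ measurable_fst, h.1, h'.1],
    by rw [Measure.map_add _ _ measurable_snd, h.2, h'.2]⟩

theorem isCoupling_map_diag (μ : Measure X) : IsCoupling (μ.map Function.diag) μ μ :=
  ⟨by rw [Measure.map_map measurable_fst measurable_diag, Function.fst_comp_diag, Measure.map_id],
    by rw [Measure.map_map measurable_snd measurable_diag, Function.snd_comp_diag, Measure.map_id]⟩

theorem isCoupling_smul_prod (μ₁ μ₂ : Measure X) [IsFiniteMeasure μ₁] [IsFiniteMeasure μ₂]
    (h : μ₁ univ = μ₂ univ) : IsCoupling ((μ₁ univ)⁻¹ • μ₁.prod μ₂) μ₁ μ₂ := by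
  by_cases h0 : μ₁ univ = 0
  · obtain rfl : μ₁ = 0 := Measure.measure_univ_eq_zero.1 h0
    obtain rfl : μ₂ = 0 := Measure.measure_univ_eq_zero.1 (h ▸ h0)
    simp [IsCoupling]
  have hinv : (μ₁ univ)⁻¹ * μ₁ univ = 1 := ENNReal.inv_mul_cancel h0 (measure_ne_top _ _)
  refine ⟨?_, ?_⟩
  · rw [Measure.map_smul, Measure.map_fst_prod, ← h, smul_smul, hinv, one_smul]
  · rw [Measure.map_smul, Measure.map_snd_prod, smul_smul, hinv, one_smul]

end Coupling

theorem dVcost_eq_indicator {X : Type*} (V : X → ℝ) :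
    dVcost V = (diagonal X)ᶜ.indicator fun q => ENNReal.ofReal (V q.1) + ENNReal.ofReal (V q.2) :=
  rfl

section Cost

variable {X : Type*} [MeasurableSpace X] [MeasurableEq X] {V : X → ℝ}

theorem measurable_dVcost (hV : Measurable V) : Measurable (dVcost V) :=
  dVcost_eq_indicator V ▸ ((hV.ennreal_ofReal.comp measurable_fst).add
    (hV.ennreal_ofReal.comp measurable_snd)).indicator measurableSet_diagonal.compl

theorem lintegral_dVcost (hV : Measurable V) (ν : Measure (X × X)) :
    ∫⁻ q, dVcost V q ∂ν =
      ∫⁻ x, ENNReal.ofReal (V x) ∂((ν.restrict (diagonal X)ᶜ).map Prod.fst) +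
        ∫⁻ x, ENNReal.ofReal (V x) ∂((ν.restrict (diagonal X)ᶜ).map Prod.snd) := by
  rw [lintegral_map hV.ennreal_ofReal measurable_fst, lintegral_map hV.ennreal_ofReal measurable_snd,
    ← lintegral_add_left (by fun_prop), dVcost_eq_indicator,
    lintegral_indicator measurableSet_diagonal.compl]

theorem lintegral_dVcost_map_diag (hV : Measurable V) (μ : Measure X) :
    ∫⁻ q, dVcost V q ∂(μ.map Function.diag) = 0 := by
  rw [lintegral_map (measurable_dVcost hV) measurable_diag]
  simp [dVcost]

theorem IsCoupling.lintegral_dVcost_of_ae_ne (hV : Measurable V) {ν : Measure (X × X)}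
    {μ₁ μ₂ : Measure X} (hν : IsCoupling ν μ₁ μ₂) (hne : ∀ᵐ q ∂ν, q.1 ≠ q.2) :
    ∫⁻ q, dVcost V q ∂ν =
      ∫⁻ x, ENNReal.ofReal (V x) ∂μ₁ + ∫⁻ x, ENNReal.ofReal (V x) ∂μ₂ := by
  rw [lintegral_dVcost hV, Measure.restrict_eq_self_of_ae_mem (s := (diagonal X)ᶜ) hne, hν.1, hν.2]

end Cost

section VNorm

open SignedMeasure

variable {X : Type*} [MeasurableSpace X] [MeasurableEq X] {V : X → ℝ}
  {μ₁ μ₂ : Measure X} [IsFiniteMeasure μ₁] [IsFiniteMeasure μ₂]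

theorem IsCoupling.toSignedMeasure_sub_eq {ν : Measure (X × X)} [IsFiniteMeasure ν]
    (hν : IsCoupling ν μ₁ μ₂) :
    μ₁.toSignedMeasure - μ₂.toSignedMeasure =
      ((ν.restrict (diagonal X)ᶜ).map Prod.fst).toSignedMeasure -
        ((ν.restrict (diagonal X)ᶜ).map Prod.snd).toSignedMeasure := by
  have hdiag : (ν.restrict (diagonal X)).map Prod.fst = (ν.restrict (diagonal X)).map Prod.snd :=
    Measure.map_congr (ae_restrict_mem measurableSet_diagonal)
  have hsplit (f : X × X → X) (hf : Measurable f) :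
      ν.map f = (ν.restrict (diagonal X)ᶜ).map f + (ν.restrict (diagonal X)).map f := by
    rw [← Measure.map_add _ _ hf, add_comm, Measure.restrict_add_restrict_compl measurableSet_diagonal]
  rw [sub_eq_sub_iff_add_eq_add, ← Measure.toSignedMeasure_add, ← Measure.toSignedMeasure_add,
    Measure.toSignedMeasure_eq_toSignedMeasure_iff, ← hν.1, ← hν.2, hsplit _ measurable_fst,
    hsplit _ measurable_snd, hdiag]
  abel

theorem vnorm_le_lintegral_dVcost (hV : Measurable V) {ν : Measure (X × X)} [IsFiniteMeasure ν]
    (hν : IsCoupling ν μ₁ μ₂) : Vnorm μ₁ μ₂ V ≤ ∫⁻ q, dVcost V q ∂ν := by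
  rw [Vnorm, hν.toSignedMeasure_sub_eq, totalVariation, lintegral_add_measure, lintegral_dVcost hV]
  gcongr
  · exact toJordanDecomposition_sub_posPart_le _ _
  · exact toJordanDecomposition_sub_negPart_le _ _

theorem exists_isCoupling_lintegral_dVcost_eq_vnorm (hV : Measurable V) (h : μ₁ univ = μ₂ univ) :
    ∃ ν, IsCoupling ν μ₁ μ₂ ∧ ∫⁻ q, dVcost V q ∂ν = Vnorm μ₁ μ₂ V := by
  set j := (μ₁.toSignedMeasure - μ₂.toSignedMeasure).toJordanDecomposition
  have hmass : j.posPart univ = j.negPart univ := by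
    have := congrArg (· univ) (add_toJordanDecomposition_sub_negPart μ₁ μ₂)
    simp only [Measure.add_apply, h] at this
    exact ((ENNReal.add_right_inj (measure_ne_top μ₂ univ)).1 this).symm
  have hprod := isCoupling_smul_prod j.posPart j.negPart hmass
  have hcoupling := (isCoupling_map_diag (μ₁ - j.posPart)).add hprod
  rw [Measure.sub_add_cancel_of_le (toJordanDecomposition_sub_posPart_le μ₁ μ₂),
    sub_toJordanDecomposition_sub_posPart_add_negPart] at hcoupling
  refine ⟨_, hcoupling, ?_⟩
  rw [lintegral_add_measure, lintegral_dVcost_map_diag hV, zero_add,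
    hprod.lintegral_dVcost_of_ae_ne hV (Measure.ae_smul_measure j.mutuallySingular.ae_prod_ne _),
    Vnorm, totalVariation, lintegral_add_measure]

end VNorm

theorem vnorm_eq_inf_coupling_and_attained_general
    {E : Type*} [MeasurableSpace E] [TopologicalSpace E] [PolishSpace E] [BorelSpace E]
    (V : E → ℝ) (hVmeas : Measurable V)
    (μ₁ μ₂ : Measure E) [IsProbabilityMeasure μ₁] [IsProbabilityMeasure μ₂] :
    IsLeast {r : ℝ≥0∞ | ∃ ν : Measure (E × E), IsProbabilityMeasure ν ∧ IsCoupling ν μ₁ μ₂ ∧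
        r = ∫⁻ p, dVcost V p ∂ν}
      (Vnorm μ₁ μ₂ V) := by
  obtain ⟨ν, hν, hcost⟩ :=
    exists_isCoupling_lintegral_dVcost_eq_vnorm hVmeas (by simp : μ₁ univ = μ₂ univ)
  refine ⟨⟨ν, hν.isProbabilityMeasure, hν, hcost.symm⟩, ?_⟩
  rintro _ ⟨ν, _, hν, rfl⟩
  exact vnorm_le_lintegral_dVcost hVmeas hν

/-- `‖μ₁ - μ₂‖_V` is the infimum of `∫ d_V dν` over all couplings `ν` of `μ₁` and `μ₂`,
and this infimum is attained. -/
theorem vnorm_eq_inf_coupling_and_attained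
    {E : Type*} [MeasurableSpace E] [TopologicalSpace E] [PolishSpace E] [BorelSpace E]
    (V : E → ℝ) (hVmeas : Measurable V) (hV1 : ∀ x, 1 ≤ V x)
    (μ₁ μ₂ : Measure E) [IsProbabilityMeasure μ₁] [IsProbabilityMeasure μ₂]
    (h₁ : ∫⁻ x, ENNReal.ofReal (V x) ∂μ₁ < ⊤) (h₂ : ∫⁻ x, ENNReal.ofReal (V x) ∂μ₂ < ⊤) :
    IsLeast {r : ℝ≥0∞ | ∃ ν : Measure (E × E), IsProbabilityMeasure ν ∧ IsCoupling ν μ₁ μ₂ ∧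
        r = ∫⁻ p, dVcost V p ∂ν}
      (Vnorm μ₁ μ₂ V) :=
  vnorm_eq_inf_coupling_and_attained_general V hVmeas μ₁ μ₂
end

section
/- Let E be a Polish space, V : E → ℝ measurable with V ≥ 1, and μ₁, μ₂ Borel probability measures on E with ∫ V dμ₁ < ∞ and ∫ V dμ₂ < ∞. Then for every coupling ν of μ₁ and μ₂ one has ∫_{E×E} 𝟙_{x≠y}(V(x)+V(y)) dν(x,y) ≥ ‖μ₁ − μ₂‖_V. -/
open MeasureTheory
open scoped ENNReal

/-!
Split a coupling `ν` into its parts on and off the diagonal. Both marginals of the diagonal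
part are the same measure, so `μ₁ - μ₂ = α₁ - α₂`, where `α₁, α₂` are the marginals of the
off-diagonal part. By minimality of the Jordan decomposition `|μ₁ - μ₂| ≤ α₁ + α₂`, and
`(α₁ + α₂)(V)` is the integral of `V x + V y` over `{x ≠ y}` against `ν`.
-/

namespace MeasureTheory

variable {E : Type*} [MeasurableSpace E]

theorem Measure.totalVariation_toSignedMeasure_sub_le_of_add_eq_add {μ₁ μ₂ α₁ α₂ : Measure E}
    [IsFiniteMeasure μ₁] [IsFiniteMeasure μ₂] [IsFiniteMeasure α₁] [IsFiniteMeasure α₂] (h : μ₁ + α₂ = μ₂ + α₁) :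
    (μ₁.toSignedMeasure - μ₂.toSignedMeasure).totalVariation ≤ α₁ + α₂ := by
  rw [SignedMeasure.totalVariation_eq_variation]
  refine VectorMeasure.variation_le_of_forall_enorm_le fun s hs => ?_
  have hs_eq : μ₁.real s - μ₂.real s = α₁.real s - α₂.real s := by
    have := congrArg (fun m : Measure E => m.real s) h
    rw [measureReal_add_apply, measureReal_add_apply] at this
    linarith
  calc ‖(μ₁.toSignedMeasure - μ₂.toSignedMeasure) s‖ₑ
      = ‖α₁.real s - α₂.real s‖ₑ := by rw [toSignedMeasure_sub_apply hs, hs_eq]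
    _ ≤ ‖α₁.real s‖ₑ + ‖α₂.real s‖ₑ := enorm_sub_le
    _ = (α₁ + α₂) s := by
      rw [Real.enorm_of_nonneg measureReal_nonneg, Real.enorm_of_nonneg measureReal_nonneg,
        ofReal_measureReal, ofReal_measureReal, Measure.add_apply]

theorem Measure.map_fst_restrict_diagonal_eq_map_snd [MeasurableEq E] (ν : Measure (E × E)) :
    (ν.restrict (Set.diagonal E)).map Prod.fst = (ν.restrict (Set.diagonal E)).map Prod.snd :=
  Measure.map_congr (ae_restrict_mem measurableSet_diagonal)

theorem Measure.map_fst_add_map_snd_restrict_compl_diagonal [MeasurableEq E]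
    (ν : Measure (E × E)) :
    ν.map Prod.fst + (ν.restrict (Set.diagonal E)ᶜ).map Prod.snd =
      ν.map Prod.snd + (ν.restrict (Set.diagonal E)ᶜ).map Prod.fst := by
  have split : ∀ f : E × E → E, Measurable f →
      ν.map f = (ν.restrict (Set.diagonal E)).map f + (ν.restrict (Set.diagonal E)ᶜ).map f :=
    fun f hf => by
      conv_lhs => rw [← ν.restrict_add_restrict_compl measurableSet_diagonal]
      exact Measure.map_add _ _ hf
  rw [split _ measurable_fst, split _ measurable_snd, ν.map_fst_restrict_diagonal_eq_map_snd,
    add_right_comm]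

theorem lintegral_map_fst_add_map_snd_le (ν : Measure (E × E)) (f : E → ℝ≥0∞) :
    ∫⁻ x, f x ∂(ν.map Prod.fst + ν.map Prod.snd) ≤ ∫⁻ p, f p.1 + f p.2 ∂ν :=
  calc ∫⁻ x, f x ∂(ν.map Prod.fst + ν.map Prod.snd)
      = ∫⁻ x, f x ∂ν.map Prod.fst + ∫⁻ x, f x ∂ν.map Prod.snd := lintegral_add_measure _ _ _
    _ ≤ ∫⁻ p, f p.1 ∂ν + ∫⁻ p, f p.2 ∂ν :=
      add_le_add (lintegral_map_le _ _) (lintegral_map_le _ _)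
    _ ≤ ∫⁻ p, f p.1 + f p.2 ∂ν := le_lintegral_add _ _

end MeasureTheory

theorem vnorm_le_coupling_cost_general
    {E : Type*} [MeasurableSpace E] [TopologicalSpace E] [PolishSpace E] [BorelSpace E]
    (V : E → ℝ)
    (μ₁ μ₂ : Measure E) [IsProbabilityMeasure μ₁] [IsProbabilityMeasure μ₂]
    (ν : Measure (E × E)) (hν : IsCoupling ν μ₁ μ₂) :
    Vnorm μ₁ μ₂ V ≤
      ∫⁻ p, {q : E × E | q.1 ≠ q.2}.indicator
        (fun q => ENNReal.ofReal (V q.1) + ENNReal.ofReal (V q.2)) p ∂ν := by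
  obtain ⟨rfl, rfl⟩ := hν
  have : IsFiniteMeasure ν := Measure.isFiniteMeasure_of_map measurable_fst.aemeasurable
  calc Vnorm (ν.map Prod.fst) (ν.map Prod.snd) V
      ≤ ∫⁻ x, ENNReal.ofReal (V x) ∂((ν.restrict (Set.diagonal E)ᶜ).map Prod.fst +
          (ν.restrict (Set.diagonal E)ᶜ).map Prod.snd) :=
        lintegral_mono' (Measure.totalVariation_toSignedMeasure_sub_le_of_add_eq_add
          ν.map_fst_add_map_snd_restrict_compl_diagonal) le_rfl
    _ ≤ ∫⁻ p, ENNReal.ofReal (V p.1) + ENNReal.ofReal (V p.2) ∂ν.restrict (Set.diagonal E)ᶜ :=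
        lintegral_map_fst_add_map_snd_le _ _
    _ = _ := (lintegral_indicator measurableSet_diagonal.compl _).symm

/-- For every coupling `ν` of `μ₁` and `μ₂`,
`∫ 𝟙_{x ≠ y} (V x + V y) dν(x,y) ≥ ‖μ₁ - μ₂‖_V`. -/
theorem vnorm_le_coupling_cost
    {E : Type*} [MeasurableSpace E] [TopologicalSpace E] [PolishSpace E] [BorelSpace E]
    (V : E → ℝ) (hVmeas : Measurable V) (hV1 : ∀ x, 1 ≤ V x)
    (μ₁ μ₂ : Measure E) [IsProbabilityMeasure μ₁] [IsProbabilityMeasure μ₂]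
    (h₁ : ∫⁻ x, ENNReal.ofReal (V x) ∂μ₁ < ⊤) (h₂ : ∫⁻ x, ENNReal.ofReal (V x) ∂μ₂ < ⊤)
    (ν : Measure (E × E)) [IsProbabilityMeasure ν] (hν : IsCoupling ν μ₁ μ₂) :
    Vnorm μ₁ μ₂ V ≤
      ∫⁻ p, {q : E × E | q.1 ≠ q.2}.indicator
        (fun q => ENNReal.ofReal (V q.1) + ENNReal.ofReal (V q.2)) p ∂ν :=
  vnorm_le_coupling_cost_general V μ₁ μ₂ ν hν
end

section
/- Let E be a Polish space and μ₁, μ₂ Borel probability measures on E. There exists a coupling ν of μ₁ and μ₂ such that for EVERY measurable function V : E → [0,∞], ∫_{E×E} 𝟙_{x≠y}(V(x)+V(y)) dν(x,y) = |μ₁−μ₂|(V). In particular a single coupling realizes the infimum of ∫ d_V dν over couplings simultaneously for all V, i.e. the optimal coupling does not depend on V. -/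
/-!
Write `μ₁ = λ + ξ` and `μ₂ = λ + η`, where `λ = μ₁ ⊓ μ₂` and `ξ = μ₁ - μ₂`, `η = μ₂ - μ₁` are the
Jordan parts of `μ₁ - μ₂`: they are mutually singular, have the same mass `m`, and
`ξ + η = |μ₁ - μ₂|`. In `ν = (x ↦ (x, x))_* λ + m⁻¹ ξ ⊗ η` the first summand lives on the diagonal,
where `d_V` vanishes, and the second off it, because `ξ` and `η` are carried by disjoint sets.
So `∫ d_V dν = m⁻¹ ∫ (V x + V y) d(ξ ⊗ η) = ∫ V dξ + ∫ V dη = |μ₁ - μ₂|(V)`, whatever `V` is.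
-/

open MeasureTheory
open scoped ENNReal
open Set

namespace MeasureTheory

variable {X : Type*} [MeasurableSpace X] {μ ν : Measure X} {s : Set X}

lemma IsHahnDecomposition.restrict_add_restrict_compl_add_sub [IsFiniteMeasure ν]
    (hs : IsHahnDecomposition μ ν s) : μ.restrict s + ν.restrict sᶜ + (μ - ν) = μ := by
  have hsub : μ - ν = μ.restrict sᶜ - ν.restrict sᶜ := by
    rw [← Measure.restrict_sub_eq_restrict_sub_restrict hs.measurableSet.compl,
      ← Measure.restrict_add_restrict_compl (μ := μ - ν) hs.measurableSet,
      Measure.restrict_eq_zero.2 (Measure.sub_apply_eq_zero_of_isHahnDecomposition hs), zero_add,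
      Measure.restrict_restrict hs.measurableSet.compl, inter_self]
  rw [hsub, add_assoc, add_comm (ν.restrict sᶜ), Measure.sub_add_cancel_of_le hs.ge_on_compl,
    Measure.restrict_add_restrict_compl hs.measurableSet]

lemma IsHahnDecomposition.sub_sub_self_eq [IsFiniteMeasure μ] [IsFiniteMeasure ν]
    (hs : IsHahnDecomposition μ ν s) : μ - (μ - ν) = μ.restrict s + ν.restrict sᶜ := by
  calc μ - (μ - ν) = μ.restrict s + ν.restrict sᶜ + (μ - ν) - (μ - ν) := by
        rw [hs.restrict_add_restrict_compl_add_sub]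
    _ = μ.restrict s + ν.restrict sᶜ := Measure.add_sub_cancel

lemma lintegral_indicator_ne_map_diag (ρ : Measure X) (f : X × X → ℝ≥0∞) :
    ∫⁻ p, {q : X × X | q.1 ≠ q.2}.indicator f p ∂ρ.map (fun x ↦ (x, x)) = 0 :=
  nonpos_iff_eq_zero.1 <| (lintegral_map_le _ _).trans_eq (by simp)

lemma lintegral_fst_add_snd {α β : Type*} [MeasurableSpace α] [MeasurableSpace β]
    (ρ : Measure (α × β)) {f : α → ℝ≥0∞} {g : β → ℝ≥0∞} (hf : Measurable f)
    (hg : Measurable g) :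
    ∫⁻ p, f p.1 + g p.2 ∂ρ = ∫⁻ x, f x ∂ρ.map Prod.fst + ∫⁻ y, g y ∂ρ.map Prod.snd := by
  rw [lintegral_add_left (f := fun p : α × β ↦ f p.1) (hf.comp measurable_fst),
    lintegral_map hf measurable_fst, lintegral_map hg measurable_snd]

namespace Measure

lemma sub_sub_self_comm [IsFiniteMeasure μ] [IsFiniteMeasure ν] :
    μ - (μ - ν) = ν - (ν - μ) := by
  obtain ⟨s, hs⟩ := exists_isHahnDecomposition μ ν
  rw [hs.sub_sub_self_eq, hs.compl.sub_sub_self_eq, compl_compl, add_comm]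

lemma sub_sub_self_add_sub [IsFiniteMeasure μ] [IsFiniteMeasure ν] :
    μ - (μ - ν) + (ν - μ) = ν := by
  rw [sub_sub_self_comm, sub_add_cancel_of_le sub_le]

lemma sub_apply_univ_comm [IsFiniteMeasure μ] [IsFiniteMeasure ν] (h : μ univ = ν univ) :
    (μ - ν) univ = (ν - μ) univ := by
  have hμ := congrArg (· univ) (sub_add_cancel_of_le (sub_le (μ := μ) (ν := ν)))
  have hν := congrArg (· univ) (sub_sub_self_add_sub (μ := μ) (ν := ν))
  simp only [add_apply] at hμ hν
  exact (ENNReal.add_right_inj (measure_ne_top _ _)).1 (hμ.trans (h.trans hν.symm))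

lemma inv_measure_univ_mul_smul_self (ξ : Measure X) [IsFiniteMeasure ξ] :
    ((ξ univ)⁻¹ * ξ univ) • ξ = ξ := by
  rcases eq_zero_or_neZero ξ with rfl | _
  · simp
  · rw [ENNReal.inv_mul_cancel (NeZero.ne _) (measure_ne_top _ _), one_smul]

lemma map_fst_inv_smul_prod {ξ η : Measure X} [IsFiniteMeasure ξ] [SFinite η]
    (h : η univ = ξ univ) :
    ((ξ univ)⁻¹ • ξ.prod η).map Prod.fst = ξ := by
  rw [Measure.map_smul, Measure.map_fst_prod, h, smul_smul, inv_measure_univ_mul_smul_self]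

lemma map_snd_inv_smul_prod {ξ η : Measure X} [SFinite ξ] [IsFiniteMeasure η]
    (h : η univ = ξ univ) :
    ((ξ univ)⁻¹ • ξ.prod η).map Prod.snd = η := by
  rw [Measure.map_smul, Measure.map_snd_prod, smul_smul, ← h, inv_measure_univ_mul_smul_self]

lemma MutuallySingular.ae_prod_fst_ne_snd {ξ η : Measure X} [SFinite η] (h : ξ ⟂ₘ η) :
    ∀ᵐ p ∂ξ.prod η, p.1 ≠ p.2 := by
  have h₁ : ∀ᵐ p ∂ξ.prod η, p.1 ∉ h.nullSet :=
    quasiMeasurePreserving_fst.ae (measure_eq_zero_iff_ae_notMem.1 h.measure_nullSet)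
  have h₂ : ∀ᵐ p ∂ξ.prod η, p.2 ∉ h.nullSetᶜ :=
    quasiMeasurePreserving_snd.ae (measure_eq_zero_iff_ae_notMem.1 h.measure_compl_nullSet)
  filter_upwards [h₁, h₂] with p hp₁ hp₂ hp
  exact hp₂ (hp ▸ hp₁)

/-- `μ - (μ - ν)` is the common part `μ ⊓ ν`. When `μ - ν = 0` the factor `0⁻¹ = ∞` multiplies
the zero measure, so the formula needs no case split. -/
noncomputable def maximalCoupling (μ ν : Measure X) : Measure (X × X) :=
  (μ - (μ - ν)).map (fun x ↦ (x, x)) + ((μ - ν) univ)⁻¹ • (μ - ν).prod (ν - μ)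

variable [IsFiniteMeasure μ] [IsFiniteMeasure ν]

lemma map_fst_maximalCoupling (h : μ univ = ν univ) :
    (maximalCoupling μ ν).map Prod.fst = μ := by
  rw [maximalCoupling, Measure.map_add _ _ measurable_fst, map_map measurable_fst (by fun_prop),
    map_fst_inv_smul_prod (sub_apply_univ_comm h).symm]
  simpa [Function.comp_def] using sub_add_cancel_of_le (sub_le (μ := μ) (ν := ν))

lemma map_snd_maximalCoupling (h : μ univ = ν univ) :
    (maximalCoupling μ ν).map Prod.snd = ν := by
  rw [maximalCoupling, Measure.map_add _ _ measurable_snd, map_map measurable_snd (by fun_prop),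
    map_snd_inv_smul_prod (sub_apply_univ_comm h).symm]
  simpa [Function.comp_def] using sub_sub_self_add_sub (μ := μ) (ν := ν)

lemma lintegral_offDiag_maximalCoupling (h : μ univ = ν univ) {V : X → ℝ≥0∞}
    (hV : Measurable V) :
    ∫⁻ p, {q : X × X | q.1 ≠ q.2}.indicator (fun q ↦ V q.1 + V q.2) p ∂maximalCoupling μ ν =
      ∫⁻ x, V x ∂(μ - ν) + ∫⁻ x, V x ∂(ν - μ) := by
  have h_off_diag : ∀ᵐ p ∂((μ - ν) univ)⁻¹ • (μ - ν).prod (ν - μ), p.1 ≠ p.2 :=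
    ae_smul_measure mutually_singular_measure_sub.ae_prod_fst_ne_snd _
  rw [maximalCoupling, lintegral_add_measure, lintegral_indicator_ne_map_diag, zero_add,
    lintegral_congr_ae (h_off_diag.mono fun p hp ↦ indicator_of_mem hp _),
    lintegral_fst_add_snd _ hV hV, map_fst_inv_smul_prod (sub_apply_univ_comm h).symm,
    map_snd_inv_smul_prod (sub_apply_univ_comm h).symm]

end Measure

lemma SignedMeasure.totalVariation_toSignedMeasure_sub [IsFiniteMeasure μ] [IsFiniteMeasure ν] :
    (μ.toSignedMeasure - ν.toSignedMeasure).totalVariation = (μ - ν) + (ν - μ) := by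
  rw [SignedMeasure.totalVariation, Measure.toJordanDecomposition_toSignedMeasure_sub]
  rfl

end MeasureTheory

theorem exists_coupling_optimal_for_all_V_general
    {E : Type*} [MeasurableSpace E]
    (μ₁ μ₂ : Measure E) [IsProbabilityMeasure μ₁] [IsProbabilityMeasure μ₂] :
    ∃ ν : Measure (E × E), IsProbabilityMeasure ν ∧
      ν.map Prod.fst = μ₁ ∧ ν.map Prod.snd = μ₂ ∧
      ∀ V : E → ℝ≥0∞, Measurable V →
        ∫⁻ p, {q : E × E | q.1 ≠ q.2}.indicator (fun q => V q.1 + V q.2) p ∂ν =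
          ∫⁻ x, V x ∂((μ₁.toSignedMeasure - μ₂.toSignedMeasure).totalVariation) := by
  have h_mass : μ₁ univ = μ₂ univ := by simp
  have h_fst := Measure.map_fst_maximalCoupling h_mass
  have : IsProbabilityMeasure ((Measure.maximalCoupling μ₁ μ₂).map Prod.fst) := by
    rw [h_fst]; infer_instance
  refine ⟨Measure.maximalCoupling μ₁ μ₂, Measure.isProbabilityMeasure_of_map Prod.fst, h_fst,
    Measure.map_snd_maximalCoupling h_mass, fun V hV ↦ ?_⟩
  rw [Measure.lintegral_offDiag_maximalCoupling h_mass hV,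
    SignedMeasure.totalVariation_toSignedMeasure_sub, lintegral_add_measure]

/-- There exists a single coupling `ν` of `μ₁` and `μ₂` which is optimal simultaneously for
all cost functions `d_V(x,y) = 𝟙_{x ≠ y}(V x + V y)`: for every measurable `V : E → [0,∞]`,
`∫ d_V dν = |μ₁ - μ₂|(V)`. -/
theorem exists_coupling_optimal_for_all_V
    {E : Type*} [MeasurableSpace E] [TopologicalSpace E] [PolishSpace E] [BorelSpace E]
    (μ₁ μ₂ : Measure E) [IsProbabilityMeasure μ₁] [IsProbabilityMeasure μ₂] :
    ∃ ν : Measure (E × E), IsProbabilityMeasure ν ∧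
      ν.map Prod.fst = μ₁ ∧ ν.map Prod.snd = μ₂ ∧
      ∀ V : E → ℝ≥0∞, Measurable V →
        ∫⁻ p, {q : E × E | q.1 ≠ q.2}.indicator (fun q => V q.1 + V q.2) p ∂ν =
          ∫⁻ x, V x ∂((μ₁.toSignedMeasure - μ₂.toSignedMeasure).totalVariation) :=
  exists_coupling_optimal_for_all_V_general μ₁ μ₂
end

section
/- Let ρ > 0, η ∈ [0,1), M ≥ 0, and let f : [0,∞) → [0,∞) be continuous and satisfy, for all t ≥ 0, f(t) ≤ e^{−ρt} f(0) + ρ ∫₀^t e^{ρ(s−t)} (η f(s) + M) ds. Then for all t ≥ 0, f(t) ≤ e^{−ρ(1−η)t} f(0) + (1 − e^{−ρ(1−η)t}) · M/(1−η). -/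
/-!
The right-hand side `u` of the hypothesis solves `u' = ρ (η f + M - u)`, `u 0 = f 0`. Since
`f ≤ u`, this gives `u' ≤ -ρ (1 - η) u + ρ M`, and Grönwall's comparison bounds `u`, hence `f`,
by the solution of `v' = -ρ (1 - η) v + ρ M`, `v 0 = f 0`, which is the claimed bound.
-/

open Set Real intervalIntegral

theorem le_gronwallBound_of_deriv_right_le {f f' : ℝ → ℝ} {δ K ε a b : ℝ}
    (hf : ContinuousOn f (Icc a b)) (hf' : ∀ x ∈ Ico a b, HasDerivWithinAt f (f' x) (Ici x) x)
    (ha : f a ≤ δ) (bound : ∀ x ∈ Ico a b, f' x ≤ K * f x + ε) :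
    ∀ x ∈ Icc a b, f x ≤ gronwallBound δ K ε (x - a) :=
  le_gronwallBound_of_liminf_deriv_right_le hf
    (fun x hx _ hr => (hf' x hx).liminf_right_slope_le hr) ha bound

noncomputable def relaxation (ρ c : ℝ) (g : ℝ → ℝ) (t : ℝ) : ℝ :=
  exp (-ρ * t) * c + ρ * ∫ s in (0 : ℝ)..t, exp (ρ * (s - t)) * g s

section relaxation

variable {ρ c : ℝ} {g : ℝ → ℝ}

@[simp]
theorem relaxation_zero : relaxation ρ c g 0 = c := by
  simp [relaxation]

theorem relaxation_eq_exp_mul (ρ c : ℝ) (g : ℝ → ℝ) (t : ℝ) :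
    relaxation ρ c g t = exp (-ρ * t) * (c + ρ * ∫ s in (0 : ℝ)..t, exp (ρ * s) * g s) := by
  have hexp : ∀ s, exp (ρ * (s - t)) * g s = exp (-ρ * t) * (exp (ρ * s) * g s) := fun s => by
    rw [← mul_assoc, ← exp_add]; ring_nf
  simp only [relaxation, hexp, integral_const_mul]
  ring

theorem relaxation_congr {g' : ℝ → ℝ} {t : ℝ} (ht : 0 ≤ t) (h : EqOn g g' (Icc 0 t)) :
    relaxation ρ c g t = relaxation ρ c g' t := by
  unfold relaxation
  congr 2
  refine integral_congr fun s hs => ?_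
  rw [uIcc_of_le ht] at hs
  simp only [h hs]

theorem hasDerivAt_relaxation (hg : Continuous g) (t : ℝ) :
    HasDerivAt (relaxation ρ c g) (ρ * (g t - relaxation ρ c g t)) t := by
  have hint : Continuous fun s => exp (ρ * s) * g s := by fun_prop
  have hexp : HasDerivAt (fun t => exp (-ρ * t)) (-ρ * exp (-ρ * t)) t := by
    simpa [mul_comm] using ((hasDerivAt_id t).const_mul (-ρ)).exp
  rw [show relaxation ρ c g = _ from funext (relaxation_eq_exp_mul ρ c g)]
  refine (hexp.mul ((hint.integral_hasStrictDerivAt 0 t).hasDerivAt.const_mul ρ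
    |>.const_add c)).congr_deriv ?_
  have hcancel : exp (-ρ * t) * exp (ρ * t) = 1 := by rw [← exp_add]; simp
  linear_combination (ρ * g t) * hcancel

end relaxation

theorem le_gronwallBound_of_le_relaxation {ρ η M : ℝ} {f : ℝ → ℝ} (hρ : 0 ≤ ρ) (hη : 0 ≤ η)
    (hf : Continuous f) (hle : ∀ t ≥ 0, f t ≤ relaxation ρ (f 0) (fun s => η * f s + M) t) :
    ∀ t ≥ 0, f t ≤ gronwallBound (f 0) (-ρ * (1 - η)) (ρ * M) t := by
  intro t ht
  set u := relaxation ρ (f 0) (fun s => η * f s + M)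
  have hu : ∀ x, HasDerivAt u (ρ * (η * f x + M - u x)) x :=
    hasDerivAt_relaxation (by fun_prop)
  have hbound := le_gronwallBound_of_deriv_right_le (a := 0) (b := t)
    (fun x _ => (hu x).continuousAt.continuousWithinAt) (fun x _ => (hu x).hasDerivWithinAt)
    relaxation_zero.le (K := -ρ * (1 - η)) (ε := ρ * M) fun x hx => by
      have : ρ * (η * f x) ≤ ρ * (η * u x) := by gcongr; exact hle x hx.1
      linarith
  simpa using (hle t ht).trans (hbound t ⟨ht, le_rfl⟩)

theorem gronwall_lyapunov_general (ρ η M : ℝ) (hρ : 0 < ρ) (hη0 : 0 ≤ η) (hη1 : η < 1)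
    (f : ℝ → ℝ) (hfc : ContinuousOn f (Set.Ici 0))
    (hineq : ∀ t ≥ (0:ℝ),
      f t ≤ Real.exp (-ρ * t) * f 0 +
        ρ * ∫ s in (0:ℝ)..t, Real.exp (ρ * (s - t)) * (η * f s + M)) :
    ∀ t ≥ (0:ℝ),
      f t ≤ Real.exp (-ρ * (1 - η) * t) * f 0 +
        (1 - Real.exp (-ρ * (1 - η) * t)) * (M / (1 - η)) := by
  intro t ht
  set φ : ℝ → ℝ := fun s => f (max s 0)
  have hφf : EqOn φ f (Ici 0) := fun s hs => by simp [φ, max_eq_left (mem_Ici.1 hs)]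
  have hφ : Continuous φ :=
    hfc.comp_continuous (by fun_prop) fun s => mem_Ici.2 (le_max_right s 0)
  have hφle : ∀ t ≥ 0, φ t ≤ relaxation ρ (φ 0) (fun s => η * φ s + M) t := fun t ht => by
    rw [hφf ht, hφf (mem_Ici.2 le_rfl), relaxation_congr (g' := fun s => η * f s + M) ht
      fun s hs => by simp [hφf hs.1]]
    exact hineq t ht
  have hK : -ρ * (1 - η) ≠ 0 := by nlinarith
  have key := le_gronwallBound_of_le_relaxation hρ.le hη0 hφ hφle t ht
  rw [hφf ht, hφf (mem_Ici.2 le_rfl), gronwallBound_of_K_ne_0 hK] at key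
  refine key.trans_eq ?_
  field_simp [show 1 - η ≠ 0 by linarith, hρ.ne']
  ring

/-- Gronwall-type estimate: if a nonnegative continuous `f` on `[0,∞)` satisfies
`f t ≤ e^{-ρt} f 0 + ρ ∫₀^t e^{ρ(s-t)} (η f s + M) ds` for all `t ≥ 0`, with `ρ > 0`,
`η ∈ [0,1)` and `M ≥ 0`, then
`f t ≤ e^{-ρ(1-η)t} f 0 + (1 - e^{-ρ(1-η)t}) M/(1-η)` for all `t ≥ 0`. -/
theorem gronwall_lyapunov (ρ η M : ℝ) (hρ : 0 < ρ) (hη0 : 0 ≤ η) (hη1 : η < 1) (hM : 0 ≤ M)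
    (f : ℝ → ℝ) (hfc : ContinuousOn f (Set.Ici 0)) (hf0 : ∀ t ≥ (0:ℝ), 0 ≤ f t)
    (hineq : ∀ t ≥ (0:ℝ),
      f t ≤ Real.exp (-ρ * t) * f 0 +
        ρ * ∫ s in (0:ℝ)..t, Real.exp (ρ * (s - t)) * (η * f s + M)) :
    ∀ t ≥ (0:ℝ),
      f t ≤ Real.exp (-ρ * (1 - η) * t) * f 0 +
        (1 - Real.exp (-ρ * (1 - η) * t)) * (M / (1 - η)) :=
  gronwall_lyapunov_general ρ η M hρ hη0 hη1 f hfc hineq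
end

section
/- Let ρ > 0, η ∈ (0,1), M ≥ 0, N ≥ 1 an integer, and let f₁, …, f_N : [0,∞) → [0,∞) be continuous functions such that, writing F = Σ_{j=1}^N f_j, for each i and all s, t ≥ 0, f_i(s+t) ≤ e^{−ρt} f_i(s) + ρ ∫₀^t e^{ρ(u−t)} ((η/N) F(s+u) + M) du. Define g_i(t) = f_i(t) + (2η/(N(1−η))) F(t). Then for each i and all t ≥ 0, g_i(t) ≤ e^{−ρ(1−η)t/2} g_i(0) + (2(1+η)M/(1−η)²) (1 − e^{−ρ(1−η)t/2}). -/
/-!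
Take `s = 0` in the hypothesis. Adding `c = 2η/(N(1-η))` times the sum of the `N`
inequalities to the `i`-th one shows that `g_i` lies below the Duhamel expression with
source `(1 + cN)((η/N) F + M)`, and this weight makes the source at most `β g_i + B`, with
`β = (1+η)/2` and `B = (1+η)M/(1-η)`, because `f_i ≥ 0`. The Duhamel expression `R` then has
right derivative `ρ(β g_i + B - R) ≤ -ρ(1-β) R + ρB` (as `g_i ≤ R`), so Grönwall's comparison
bounds `R`, hence `g_i`, by the solution of `y' = -ρ(1-β) y + ρB`, whose rate is `ρ(1-η)/2` and
whose equilibrium is `ρB/(ρ(1-β)) = 2(1+η)M/(1-η)²`.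
-/

open Finset Real

/-- The mild solution of `y' = ρ (φ - y)`, `y 0 = a`. -/
noncomputable def duhamel (ρ a : ℝ) (φ : ℝ → ℝ) (T : ℝ) : ℝ :=
  exp (-ρ * T) * a + ρ * ∫ u in (0:ℝ)..T, exp (ρ * (u - T)) * φ u

theorem duhamel_eq_exp_mul (ρ a : ℝ) (φ : ℝ → ℝ) (T : ℝ) :
    duhamel ρ a φ T = exp (-ρ * T) * (a + ρ * ∫ u in (0:ℝ)..T, exp (ρ * u) * φ u) := by
  have h : ∀ u, exp (ρ * (u - T)) * φ u = exp (-ρ * T) * (exp (ρ * u) * φ u) := fun u => by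
    rw [← mul_assoc, ← exp_add]; ring_nf
  simp only [duhamel, h, intervalIntegral.integral_const_mul]
  ring

theorem continuousOn_duhamel {ρ a t : ℝ} {φ : ℝ → ℝ} (hφ : ContinuousOn φ (Set.Icc 0 t)) :
    ContinuousOn (duhamel ρ a φ) (Set.Icc 0 t) := by
  rcases lt_or_ge t 0 with ht | ht
  · simp [Set.Icc_eq_empty_of_lt ht]
  have hprim : ContinuousOn (fun T => ∫ u in (0:ℝ)..T, exp (ρ * u) * φ u) (Set.Icc 0 t) := by
    rw [← Set.uIcc_of_le ht]
    apply intervalIntegral.continuousOn_primitive_interval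
    rw [Set.uIcc_of_le ht]
    exact (by fun_prop : ContinuousOn (fun u => exp (ρ * u) * φ u) _).integrableOn_Icc
  simp only [funext (duhamel_eq_exp_mul ρ a φ)]
  fun_prop

theorem hasDerivWithinAt_duhamel {ρ a : ℝ} {φ : ℝ → ℝ} (hφ : ContinuousOn φ (Set.Ici 0))
    {T : ℝ} (hT : 0 ≤ T) :
    HasDerivWithinAt (duhamel ρ a φ) (ρ * (φ T - duhamel ρ a φ T)) (Set.Ici T) T := by
  have hψ : ContinuousOn (fun u => exp (ρ * u) * φ u) (Set.Ici 0) := by fun_prop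
  have hIoi : Set.Ioi T ⊆ Set.Ici 0 := fun u hu => hT.trans (le_of_lt hu)
  have hprim : HasDerivWithinAt (fun T => ∫ u in (0:ℝ)..T, exp (ρ * u) * φ u)
      (exp (ρ * T) * φ T) (Set.Ici T) T :=
    intervalIntegral.integral_hasDerivWithinAt_right
      ((hψ.mono Set.Icc_subset_Ici_self).intervalIntegrable_of_Icc hT)
      ((hψ.mono hIoi).stronglyMeasurableAtFilter_nhdsWithin measurableSet_Ioi T)
      ((hψ T hT).mono hIoi)
  have hexp : HasDerivAt (fun T => exp (-ρ * T)) (-ρ * exp (-ρ * T)) T := by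
    simpa [mul_comm] using ((hasDerivAt_id T).const_mul (-ρ)).exp
  simp only [funext (duhamel_eq_exp_mul ρ a φ)]
  refine (hexp.hasDerivWithinAt.fun_mul ((hprim.const_mul ρ).const_add a)).congr_deriv ?_
  have : exp (-ρ * T) * exp (ρ * T) = 1 := by rw [← exp_add]; simp
  linear_combination (ρ * φ T) * this

theorem duhamel_mono {ρ a T : ℝ} {φ ψ : ℝ → ℝ} (hρ : 0 ≤ ρ) (hT : 0 ≤ T)
    (hφ : ContinuousOn φ (Set.Icc 0 T)) (hψ : ContinuousOn ψ (Set.Icc 0 T))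
    (h : ∀ u ∈ Set.Icc 0 T, φ u ≤ ψ u) : duhamel ρ a φ T ≤ duhamel ρ a ψ T := by
  unfold duhamel
  gcongr
  refine intervalIntegral.integral_mono_on hT ?_ ?_ fun u hu => ?_
  · exact ContinuousOn.intervalIntegrable_of_Icc hT (by fun_prop)
  · exact ContinuousOn.intervalIntegrable_of_Icc hT (by fun_prop)
  · exact mul_le_mul_of_nonneg_left (h u hu) (exp_pos _).le

theorem le_gronwallBound_of_le_duhamel {ρ β B : ℝ} {g : ℝ → ℝ} (hg : ContinuousOn g (Set.Ici 0))
    (hρ : 0 ≤ ρ) (hβ : 0 ≤ β) (h : ∀ T ≥ 0, g T ≤ duhamel ρ (g 0) (fun u => β * g u + B) T) :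
    ∀ t ≥ 0, g t ≤ gronwallBound (g 0) (-(ρ * (1 - β))) (ρ * B) t := by
  intro t ht
  have hφ : ContinuousOn (fun u => β * g u + B) (Set.Ici 0) := by fun_prop
  have hR : duhamel ρ (g 0) (fun u => β * g u + B) t ≤
      gronwallBound (g 0) (-(ρ * (1 - β))) (ρ * B) (t - 0) := by
    refine le_gronwallBound_of_liminf_deriv_right_le
      (continuousOn_duhamel (hφ.mono Set.Icc_subset_Ici_self))
      (fun x hx _ hr => (hasDerivWithinAt_duhamel hφ hx.1).liminf_right_slope_le hr)
      (by simp [duhamel]) (fun x hx => ?_) t ⟨ht, le_rfl⟩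
    have := mul_le_mul_of_nonneg_left (h x hx.1) (mul_nonneg hρ hβ)
    linarith
  simpa using (h t ht).trans hR

theorem add_mul_sum_le_duhamel {ι : Type*} [Fintype ι] {ρ c T : ℝ} {φ : ℝ → ℝ}
    {f : ι → ℝ → ℝ} (hc : 0 ≤ c) (h : ∀ j, f j T ≤ duhamel ρ (f j 0) φ T) (i : ι) :
    f i T + c * ∑ j, f j T ≤
      duhamel ρ (f i 0 + c * ∑ j, f j 0) (fun u => (1 + c * Fintype.card ι) * φ u) T := by
  set I := ρ * ∫ u in (0:ℝ)..T, exp (ρ * (u - T)) * φ u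
  have hsum : ∑ j, f j T ≤ exp (-ρ * T) * ∑ j, f j 0 + Fintype.card ι * I := by
    calc ∑ j, f j T ≤ ∑ j, (exp (-ρ * T) * f j 0 + I) := sum_le_sum fun j _ => h j
      _ = _ := by rw [sum_add_distrib, ← mul_sum, sum_const, card_univ, nsmul_eq_mul]
  have hI : ρ * ∫ u in (0:ℝ)..T, exp (ρ * (u - T)) * ((1 + c * Fintype.card ι) * φ u) =
      (1 + c * Fintype.card ι) * I := by
    simp only [I, mul_left_comm _ (1 + c * _), intervalIntegral.integral_const_mul]
  have hi := h i
  rw [duhamel] at hi ⊢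
  rw [hI]
  linear_combination hi + c * hsum

theorem weighted_source_le {n η M x S : ℝ} (hn : n ≠ 0) (hη₀ : -1 ≤ η) (hη₁ : η < 1)
    (hx : 0 ≤ x) :
    (1 + 2 * η / (n * (1 - η)) * n) * (η / n * S + M) ≤
      (1 + η) / 2 * (x + 2 * η / (n * (1 - η)) * S) + (1 + η) * M / (1 - η) := by
  have hη : 1 - η ≠ 0 := by linarith
  have hid : (1 + 2 * η / (n * (1 - η)) * n) * (η / n * S + M) =
      (1 + η) / 2 * (2 * η / (n * (1 - η)) * S) + (1 + η) * M / (1 - η) := by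
    field_simp; ring
  rw [hid]
  linarith [mul_nonneg (by linarith : (0:ℝ) ≤ (1 + η) / 2) hx]

theorem gronwall_weighted_lyapunov_system_general (ρ η M : ℝ) (hρ : 0 < ρ) (hη0 : 0 < η) (hη1 : η < 1)
    (N : ℕ) (f : Fin N → ℝ → ℝ)
    (hfc : ∀ i, ContinuousOn (f i) (Set.Ici 0))
    (hf0 : ∀ i, ∀ t ≥ (0:ℝ), 0 ≤ f i t)
    (hineq : ∀ i, ∀ s ≥ (0:ℝ), ∀ t ≥ (0:ℝ),
      f i (s + t) ≤ Real.exp (-ρ * t) * f i s +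
        ρ * ∫ u in (0:ℝ)..t, Real.exp (ρ * (u - t)) * ((η / N) * (∑ j, f j (s + u)) + M)) :
    ∀ i, ∀ t ≥ (0:ℝ),
      f i t + (2 * η / (N * (1 - η))) * ∑ j, f j t ≤
        Real.exp (-(ρ * (1 - η)) * t / 2) *
            (f i 0 + (2 * η / (N * (1 - η))) * ∑ j, f j 0) +
          (2 * (1 + η) * M / (1 - η) ^ 2) * (1 - Real.exp (-(ρ * (1 - η)) * t / 2)) := by
  intro i t ht
  have hN : (N : ℝ) ≠ 0 := by exact_mod_cast i.pos.ne'
  set c := 2 * η / (N * (1 - η))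
  set g := fun u => f i u + c * ∑ j, f j u
  have hgc : ContinuousOn g (Set.Ici 0) := by fun_prop
  have hg : ∀ T ≥ 0,
      g T ≤ duhamel ρ (g 0) (fun u => (1 + η) / 2 * g u + (1 + η) * M / (1 - η)) T := by
    intro T hT
    have hIcc : Set.Icc 0 T ⊆ Set.Ici 0 := Set.Icc_subset_Ici_self
    have hfc' : ∀ j, ContinuousOn (f j) (Set.Icc 0 T) := fun j => (hfc j).mono hIcc
    refine (add_mul_sum_le_duhamel (by bound) (φ := fun u => η / N * ∑ j, f j u + M)
      (fun j => by simpa [duhamel] using hineq j 0 le_rfl T hT) i).trans ?_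
    rw [Fintype.card_fin]
    exact duhamel_mono hρ.le hT (by fun_prop) (by fun_prop)
      fun u hu => weighted_source_le hN (by linarith) hη1 (hf0 i u hu.1)
  calc g t ≤ _ := le_gronwallBound_of_le_duhamel hgc hρ.le (by linarith) hg t ht
    _ = _ := by
      rw [gronwallBound_of_K_ne_0 (by nlinarith),
        show -(ρ * (1 - (1 + η) / 2)) = -(ρ * (1 - η)) / 2 by ring]
      have hη : 1 - η ≠ 0 := by linarith
      simp only [g, div_mul_eq_mul_div]
      field_simp
      ring

/-- Weighted Lyapunov decay for a system: if nonnegative continuous `f₁, …, f_N` on `[0,∞)`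
satisfy, with `F = ∑_j f_j`,
`f_i (s+t) ≤ e^{-ρt} f_i s + ρ ∫₀^t e^{ρ(u-t)} ((η/N) F (s+u) + M) du` for all `i` and
`s, t ≥ 0`, where `ρ > 0`, `η ∈ (0,1)` and `M ≥ 0`, then, setting
`g_i t = f_i t + (2η/(N(1-η))) F t`, one has
`g_i t ≤ e^{-ρ(1-η)t/2} g_i 0 + (2(1+η)M/(1-η)²)(1 - e^{-ρ(1-η)t/2})` for all `i`, `t ≥ 0`. -/
theorem gronwall_weighted_lyapunov_system (ρ η M : ℝ) (hρ : 0 < ρ) (hη0 : 0 < η) (hη1 : η < 1)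
    (hM : 0 ≤ M) (N : ℕ) (hN : 1 ≤ N) (f : Fin N → ℝ → ℝ)
    (hfc : ∀ i, ContinuousOn (f i) (Set.Ici 0))
    (hf0 : ∀ i, ∀ t ≥ (0:ℝ), 0 ≤ f i t)
    (hineq : ∀ i, ∀ s ≥ (0:ℝ), ∀ t ≥ (0:ℝ),
      f i (s + t) ≤ Real.exp (-ρ * t) * f i s +
        ρ * ∫ u in (0:ℝ)..t, Real.exp (ρ * (u - t)) * ((η / N) * (∑ j, f j (s + u)) + M)) :
    ∀ i, ∀ t ≥ (0:ℝ),
      f i t + (2 * η / (N * (1 - η))) * ∑ j, f j t ≤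
        Real.exp (-(ρ * (1 - η)) * t / 2) *
            (f i 0 + (2 * η / (N * (1 - η))) * ∑ j, f j 0) +
          (2 * (1 + η) * M / (1 - η) ^ 2) * (1 - Real.exp (-(ρ * (1 - η)) * t / 2)) :=
  gronwall_weighted_lyapunov_system_general ρ η M hρ hη0 hη1 N f hfc hf0 hineq
end

section
/- Let a, b : [0,∞) → ℝ be differentiable at 0 with a(0) = 1, b(0) = 0 and a'(0) < 0, and let F : [0,∞) → [0,∞) satisfy F(s+t) ≤ a(t) F(s) + b(t) for all s, t ≥ 0. Then for all t ≥ 0, F(t) ≤ e^{a'(0)t} F(0) + (b'(0)/(−a'(0))) (1 − e^{a'(0)t}). -/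
/-!
Splitting `[0, t]` into `n` steps of length `t / n` and iterating the contraction estimate
gives `F t ≤ a (t/n) ^ n * F 0 + b (t/n) / (1 - a (t/n)) * (1 - a (t/n) ^ n)`, the second term
being the fixed point of `x ↦ a (t/n) * x + b (t/n)` times `1 - a (t/n) ^ n`. Since
`n * (a (t/n) - 1) → a' t` and `n * b (t/n) → b' t`, the right-hand side tends to the claimed
bound as `n → ∞`.
-/

open Filter Topology

/-- Subtracting the fixed point `c` of `x ↦ α * x + β` turns the recursion into
`x (k + 1) - c ≤ α * (x k - c)`. -/
theorem le_pow_mul_add_of_le_mul_add {x : ℕ → ℝ} {α β c : ℝ} (hα : 0 ≤ α)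
    (hc : α * c + β = c) (hx : ∀ k, x (k + 1) ≤ α * x k + β) (k : ℕ) :
    x k ≤ α ^ k * x 0 + c * (1 - α ^ k) := by
  induction k with
  | zero => simp
  | succ k ih =>
    calc x (k + 1) ≤ α * x k + β := hx k
      _ ≤ α * (α ^ k * x 0 + c * (1 - α ^ k)) + β := by gcongr
      _ = α ^ (k + 1) * x 0 + c * (1 - α ^ (k + 1)) := by linear_combination hc

theorem le_pow_mul_add_of_forall_add_le {F : ℝ → ℝ} {h α β : ℝ} (hh : 0 ≤ h) (hα : 0 ≤ α)
    (hα1 : α ≠ 1) (hF : ∀ s ≥ 0, F (s + h) ≤ α * F s + β) (n : ℕ) :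
    F (n * h) ≤ α ^ n * F 0 + β / (1 - α) * (1 - α ^ n) := by
  have hfix : α * (β / (1 - α)) + β = β / (1 - α) := by
    field_simp [sub_ne_zero.mpr hα1.symm]
    ring
  simpa using le_pow_mul_add_of_le_mul_add (x := fun k : ℕ ↦ F (k * h)) hα hfix
    (fun k ↦ by simpa [add_mul] using hF (k * h) (by positivity)) n

theorem HasDerivWithinAt.tendsto_nat_mul_sub_comp_div {f : ℝ → ℝ} {f' t : ℝ}
    (hf : HasDerivWithinAt f f' (Set.Ici 0) 0) (ht : 0 < t) :
    Tendsto (fun n : ℕ ↦ n * (f (t / n) - f 0)) atTop (𝓝 (f' * t)) := by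
  have hslope : Tendsto (slope f 0) (𝓝[>] 0) (𝓝 f') :=
    (hasDerivWithinAt_iff_tendsto_slope' (lt_irrefl 0)).mp hf.Ioi_of_Ici
  have hstep : Tendsto (fun n : ℕ ↦ t / n) atTop (𝓝[>] 0) :=
    tendsto_nhdsWithin_iff.mpr ⟨tendsto_const_div_atTop_nhds_zero_nat t,
      eventually_gt_atTop 0 |>.mono fun n hn ↦ div_pos ht (by exact_mod_cast hn)⟩
  refine ((hslope.comp hstep).mul_const t).congr' ?_
  filter_upwards [eventually_ne_atTop 0] with n hn
  have : (n : ℝ) ≠ 0 := by exact_mod_cast hn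
  simp only [Function.comp_apply, slope_def_field, sub_zero]
  field_simp

section NatMulLimits

variable {α β : ℕ → ℝ} {A B : ℝ}

theorem eventually_nonneg_and_lt_one_of_tendsto_nat_mul
    (hα : Tendsto (fun n : ℕ ↦ n * (α n - 1)) atTop (𝓝 A)) (hA : A < 0) :
    ∀ᶠ n in atTop, 0 ≤ α n ∧ α n < 1 := by
  have hα1 : Tendsto (fun n ↦ α n - 1) atTop (𝓝 0) := by
    refine (hα.div_atTop tendsto_natCast_atTop_atTop).congr' ?_
    filter_upwards [eventually_ne_atTop 0] with n hn
    field_simp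
  filter_upwards [hα1.eventually (lt_mem_nhds neg_one_lt_zero),
    hα.eventually (gt_mem_nhds hA)] with n h_gt h_neg
  exact ⟨by linarith, sub_neg.mp (neg_of_mul_neg_right h_neg n.cast_nonneg)⟩

theorem tendsto_div_one_sub_of_tendsto_nat_mul
    (hα : Tendsto (fun n : ℕ ↦ n * (α n - 1)) atTop (𝓝 A))
    (hβ : Tendsto (fun n : ℕ ↦ n * β n) atTop (𝓝 B)) (hA : A ≠ 0) :
    Tendsto (fun n ↦ β n / (1 - α n)) atTop (𝓝 (B / -A)) := by
  refine (hβ.div hα.neg (neg_ne_zero.mpr hA)).congr' ?_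
  filter_upwards [eventually_ne_atTop 0] with n hn
  rw [Pi.div_apply, ← mul_div_mul_left _ (1 - α n) (Nat.cast_ne_zero.mpr hn)]
  congr 1
  ring

end NatMulLimits

theorem iterate_contraction_decay_general (a b : ℝ → ℝ) (a' b' : ℝ)
    (ha : HasDerivWithinAt a a' (Set.Ici 0) 0) (hb : HasDerivWithinAt b b' (Set.Ici 0) 0)
    (ha0 : a 0 = 1) (hb0 : b 0 = 0) (ha' : a' < 0)
    (F : ℝ → ℝ)
    (hFab : ∀ s ≥ (0:ℝ), ∀ t ≥ (0:ℝ), F (s + t) ≤ a t * F s + b t) :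
    ∀ t ≥ (0:ℝ),
      F t ≤ Real.exp (a' * t) * F 0 + (b' / (-a')) * (1 - Real.exp (a' * t)) := by
  intro t ht
  rcases ht.eq_or_lt with rfl | ht
  · simp
  have hA : Tendsto (fun n : ℕ ↦ n * (a (t / n) - 1)) atTop (𝓝 (a' * t)) := by
    simpa [ha0] using ha.tendsto_nat_mul_sub_comp_div ht
  have hB : Tendsto (fun n : ℕ ↦ n * b (t / n)) atTop (𝓝 (b' * t)) := by
    simpa [hb0] using hb.tendsto_nat_mul_sub_comp_div ht
  have hat : a' * t < 0 := mul_neg_of_neg_of_pos ha' ht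
  have hpow : Tendsto (fun n : ℕ ↦ a (t / n) ^ n) atTop (𝓝 (Real.exp (a' * t))) := by
    simpa using Real.tendsto_one_add_pow_exp_of_tendsto hA
  have hfix : Tendsto (fun n : ℕ ↦ b (t / n) / (1 - a (t / n))) atTop (𝓝 (b' / (-a'))) := by
    simpa [← neg_mul, mul_div_mul_right _ _ ht.ne'] using
      tendsto_div_one_sub_of_tendsto_nat_mul hA hB hat.ne
  refine ge_of_tendsto ((hpow.mul_const _).add (hfix.mul (tendsto_const_nhds.sub hpow))) ?_
  filter_upwards [eventually_ne_atTop 0,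
    eventually_nonneg_and_lt_one_of_tendsto_nat_mul hA hat] with n hn ⟨hpos, hlt⟩
  have hstep : 0 ≤ t / n := div_nonneg ht.le n.cast_nonneg
  simpa [mul_div_cancel₀ t (Nat.cast_ne_zero.mpr hn)] using
    le_pow_mul_add_of_forall_add_le hstep hpos hlt.ne (fun s hs ↦ hFab s hs _ hstep) n

/-- Iteration lemma: if `F : [0,∞) → [0,∞)` satisfies `F (s+t) ≤ a t * F s + b t` for all
`s, t ≥ 0`, where `a 0 = 1`, `b 0 = 0`, `a` and `b` are differentiable at `0` (from the
right) with `a' 0 < 0`, then `F t ≤ e^{a'(0)t} F 0 + (b'(0)/(-a'(0)))(1 - e^{a'(0)t})`. -/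
theorem iterate_contraction_decay (a b : ℝ → ℝ) (a' b' : ℝ)
    (ha : HasDerivWithinAt a a' (Set.Ici 0) 0) (hb : HasDerivWithinAt b b' (Set.Ici 0) 0)
    (ha0 : a 0 = 1) (hb0 : b 0 = 0) (ha' : a' < 0)
    (F : ℝ → ℝ) (hF0 : ∀ t ≥ (0:ℝ), 0 ≤ F t)
    (hFab : ∀ s ≥ (0:ℝ), ∀ t ≥ (0:ℝ), F (s + t) ≤ a t * F s + b t) :
    ∀ t ≥ (0:ℝ),
      F t ≤ Real.exp (a' * t) * F 0 + (b' / (-a')) * (1 - Real.exp (a' * t)) :=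
  iterate_contraction_decay_general a b a' b' ha hb ha0 hb0 ha' F hFab
end

section
/- Let u : [0,∞) → [0,∞) be continuous, let a₁ : [0,∞) → [0,∞) be continuous, and let a₂ : [0,∞) → [0,∞) be continuous with a₂(0) = 1 and differentiable at 0. Suppose that for all s, t ≥ 0, u(s+t) ≤ a₂(t) u(s) + a₁(t) ∫₀^t u(s+r) dr. Then for all t ≥ 0, u(t) ≤ e^{(a₂'(0) + a₁(0)) t} u(0). -/
/-!
Grönwall's lemma applied to `r ↦ u (s + r)` on `[0, 1]` gives a crude bound `u (s + r) ≤ M u s`.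
Fed back once into the hypothesis it sharpens to `u (s + r) ≤ (a₂ r + K r) u s`, and once more to
`u (s + h) ≤ B h u s` with `B h = a₂ h + a₁ h ∫₀ʰ (a₂ r + K r) dr`. Now `B 0 = 1` and the right
derivative of `B` at `0` is `a₂'(0) + a₁ 0`, so iterating with step `t / n` gives
`u t ≤ B (t / n) ^ n u 0 → exp ((a₂'(0) + a₁ 0) t) u 0`.
-/

open Set Filter Real
open scoped Topology

theorem HasDerivWithinAt.mul_of_eq_zero {a J : ℝ → ℝ} {j x : ℝ} {s : Set ℝ}
    (hJ : HasDerivWithinAt J j s x) (hJx : J x = 0) (ha : ContinuousWithinAt a s x) :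
    HasDerivWithinAt (fun y => a y * J y) (a x * j) s x := by
  rw [hasDerivWithinAt_iff_tendsto_slope] at hJ ⊢
  refine ((ha.mono_left (nhdsWithin_mono x sdiff_subset)).mul hJ).congr fun y => ?_
  simp only [slope_def_field, hJx, mul_zero, sub_zero]
  ring

theorem ContinuousOn.hasDerivWithinAt_integral_Icc {g : ℝ → ℝ} {a b x : ℝ}
    (hg : ContinuousOn g (Icc a b)) (hx : x ∈ Icc a b) :
    HasDerivWithinAt (fun t => ∫ r in a..t, g r) (g x) (Icc a b) x := by
  have : Fact (x ∈ Icc a b) := ⟨hx⟩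
  refine intervalIntegral.integral_hasDerivWithinAt_right ?_
    (hg.stronglyMeasurableAtFilter_nhdsWithin measurableSet_Icc x) (hg x hx)
  exact (hg.mono (Icc_subset_Icc_right hx.2)).intervalIntegrable_of_Icc hx.1

theorem ContinuousOn.comp_const_add_Ici {u : ℝ → ℝ} {s : ℝ} (hu : ContinuousOn u (Ici 0))
    (hs : 0 ≤ s) : ContinuousOn (fun r => u (s + r)) (Ici 0) :=
  hu.comp (continuousOn_const.add continuousOn_id) fun _ hr => add_nonneg hs hr

theorem le_mul_exp_of_le_add_mul_integral {g : ℝ → ℝ} {A C a b : ℝ}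
    (hg : ContinuousOn g (Icc a b)) (hC : 0 ≤ C)
    (hle : ∀ t ∈ Icc a b, g t ≤ A + C * ∫ r in a..t, g r) :
    ∀ t ∈ Icc a b, g t ≤ A * exp (C * (t - a)) := by
  have hF (x) (hx : x ∈ Icc a b) := hg.hasDerivWithinAt_integral_Icc hx
  have hFle := le_gronwallBound_of_liminf_deriv_right_le (δ := 0) (K := C) (ε := A)
    (fun x hx => (hF x hx).continuousWithinAt)
    (fun x hx _ hr => ((hF x (Ico_subset_Icc_self hx)).mono_of_mem_nhdsWithin
      (Icc_mem_nhdsGE_of_mem hx)).liminf_right_slope_le hr)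
    (by simp) (fun x hx => by linarith [hle x (Ico_subset_Icc_self hx)])
  intro t ht
  calc g t ≤ A + C * ∫ r in a..t, g r := hle t ht
    _ ≤ A + C * gronwallBound 0 C A (t - a) := by gcongr; exact hFle t ht
    _ = A * exp (C * (t - a)) := by
      rcases hC.eq_or_lt with rfl | hC
      · simp
      · rw [gronwallBound_of_K_ne_0 hC.ne']
        field_simp
        ring

theorem tendsto_const_div_natCast_nhdsGT_zero {t : ℝ} (ht : 0 < t) :
    Tendsto (fun n : ℕ => t / n) atTop (𝓝[>] 0) :=
  tendsto_nhdsWithin_iff.2 ⟨tendsto_const_div_atTop_nhds_zero_nat t,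
    (eventually_gt_atTop 0).mono fun _ hn => div_pos ht (Nat.cast_pos.2 hn)⟩

theorem tendsto_apply_div_pow_of_hasDerivWithinAt {B : ℝ → ℝ} {L t : ℝ} (hB0 : B 0 = 1)
    (hB : HasDerivWithinAt B L (Ici 0) 0) (ht : 0 < t) :
    Tendsto (fun n : ℕ => B (t / n) ^ n) atTop (𝓝 (exp (L * t))) := by
  have hslope : Tendsto (slope B 0) (𝓝[>] 0) (𝓝 L) :=
    (hasDerivWithinAt_iff_tendsto_slope' (lt_irrefl 0)).1 hB.Ioi_of_Ici
  have hlim : Tendsto (fun n : ℕ => n * (B (t / n) - 1)) atTop (𝓝 (L * t)) := by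
    refine ((hslope.comp (tendsto_const_div_natCast_nhdsGT_zero ht)).mul_const t).congr' ?_
    filter_upwards [eventually_ne_atTop 0] with n hn
    have : (n : ℝ) ≠ 0 := Nat.cast_ne_zero.2 hn
    simp only [Function.comp_apply, slope_def_field, hB0, sub_zero]
    field_simp
  simpa using Real.tendsto_one_add_pow_exp_of_tendsto hlim

theorem apply_natCast_mul_le_pow_mul {u : ℝ → ℝ} {b h : ℝ} (hb : 0 ≤ b) (hh : 0 ≤ h)
    (hstep : ∀ s ≥ 0, u (s + h) ≤ b * u s) (n : ℕ) : u (n * h) ≤ b ^ n * u 0 := by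
  induction n with
  | zero => simp
  | succ n ih =>
    calc u ((n + 1 : ℕ) * h) = u (n * h + h) := by push_cast; ring_nf
      _ ≤ b * u (n * h) := hstep _ (by positivity)
      _ ≤ b * (b ^ n * u 0) := by gcongr
      _ = b ^ (n + 1) * u 0 := by ring

theorem le_exp_mul_of_eventually_add_le_mul {u B : ℝ → ℝ} {L t : ℝ} (hB0 : B 0 = 1)
    (hB : HasDerivWithinAt B L (Ici 0) 0)
    (hstep : ∀ᶠ h in 𝓝[≥] 0, ∀ s ≥ 0, u (s + h) ≤ B h * u s) (ht : 0 ≤ t) :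
    u t ≤ exp (L * t) * u 0 := by
  rcases ht.eq_or_lt with rfl | ht
  · simp
  have hBpos : ∀ᶠ h in 𝓝[≥] 0, 0 < B h :=
    hB.continuousWithinAt.eventually_const_lt (by rw [hB0]; exact one_pos)
  have hdiv : Tendsto (fun n : ℕ => t / n) atTop (𝓝[≥] 0) :=
    (tendsto_const_div_natCast_nhdsGT_zero ht).mono_right (nhdsWithin_mono 0 Ioi_subset_Ici_self)
  refine ge_of_tendsto ((tendsto_apply_div_pow_of_hasDerivWithinAt hB0 hB ht).mul_const (u 0)) ?_
  filter_upwards [hdiv.eventually (hBpos.and hstep), hdiv.eventually self_mem_nhdsWithin,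
    eventually_ne_atTop 0] with n ⟨hBn, hstepn⟩ hn0 hn
  have := apply_natCast_mul_le_pow_mul hBn.le hn0 hstepn n
  rwa [mul_div_cancel₀ t (Nat.cast_ne_zero.2 hn)] at this

theorem add_le_mul_mul_exp_of_le {u a₁ a₂ : ℝ → ℝ} {s b C₁ C₂ : ℝ}
    (hu : ContinuousOn (fun r => u (s + r)) (Icc 0 b)) (hu0 : ∀ r ∈ Icc 0 b, 0 ≤ u (s + r))
    (hC₁ : 0 ≤ C₁) (ha₁ : ∀ t ∈ Icc 0 b, a₁ t ≤ C₁) (ha₂ : ∀ t ∈ Icc 0 b, a₂ t ≤ C₂)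
    (hineq : ∀ t ∈ Icc 0 b, u (s + t) ≤ a₂ t * u s + a₁ t * ∫ r in 0..t, u (s + r)) :
    ∀ t ∈ Icc 0 b, u (s + t) ≤ C₂ * u s * exp (C₁ * t) := by
  have hle : ∀ t ∈ Icc 0 b, u (s + t) ≤ C₂ * u s + C₁ * ∫ r in 0..t, u (s + r) := by
    intro t ht
    have hus : 0 ≤ u s := by simpa using hu0 0 ⟨le_rfl, ht.1.trans ht.2⟩
    have hint : 0 ≤ ∫ r in 0..t, u (s + r) :=
      intervalIntegral.integral_nonneg ht.1 fun r hr => hu0 r ⟨hr.1, hr.2.trans ht.2⟩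
    calc u (s + t) ≤ a₂ t * u s + a₁ t * ∫ r in 0..t, u (s + r) := hineq t ht
      _ ≤ C₂ * u s + C₁ * ∫ r in 0..t, u (s + r) := by
        gcongr
        exacts [ha₂ t ht, ha₁ t ht]
  intro t ht
  simpa using le_mul_exp_of_le_add_mul_integral hu hC₁ hle t ht

theorem exists_add_le_add_mul_mul {u a₁ a₂ : ℝ → ℝ} (huc : ContinuousOn u (Ici 0))
    (hu0 : ∀ t ≥ (0:ℝ), 0 ≤ u t) (ha₁c : ContinuousOn a₁ (Ici 0))
    (ha₂c : ContinuousOn a₂ (Ici 0))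
    (hineq : ∀ s ≥ (0:ℝ), ∀ t ≥ (0:ℝ),
      u (s + t) ≤ a₂ t * u s + a₁ t * ∫ r in (0:ℝ)..t, u (s + r)) :
    ∃ K, ∀ s ≥ (0:ℝ), ∀ r ∈ Icc (0:ℝ) 1, u (s + r) ≤ (a₂ r + K * r) * u s := by
  obtain ⟨C₁, hC₁⟩ := isCompact_Icc.exists_bound_of_continuousOn
    (ha₁c.mono (Icc_subset_Ici_self : Icc (0:ℝ) 1 ⊆ _))
  obtain ⟨C₂, hC₂⟩ := isCompact_Icc.exists_bound_of_continuousOn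
    (ha₂c.mono (Icc_subset_Ici_self : Icc (0:ℝ) 1 ⊆ _))
  have hC₁0 : 0 ≤ C₁ := (norm_nonneg _).trans (hC₁ 0 ⟨le_rfl, zero_le_one⟩)
  have hC₂0 : 0 ≤ C₂ := (norm_nonneg _).trans (hC₂ 0 ⟨le_rfl, zero_le_one⟩)
  have ha₁ (t) (ht : t ∈ Icc (0:ℝ) 1) : a₁ t ≤ C₁ := (le_abs_self _).trans (hC₁ t ht)
  refine ⟨C₁ * (C₂ * exp C₁), fun s hs r hr => ?_⟩
  have hshift : ContinuousOn (fun r => u (s + r)) (Icc 0 1) :=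
    (huc.comp_const_add_Ici hs).mono Icc_subset_Ici_self
  have hcrude : ∀ ρ ∈ Icc (0:ℝ) 1, u (s + ρ) ≤ C₂ * exp C₁ * u s := fun ρ hρ => by
    have := add_le_mul_mul_exp_of_le hshift (fun r hr => hu0 _ (add_nonneg hs hr.1)) hC₁0 ha₁
      (fun t ht => (le_abs_self _).trans (hC₂ t ht)) (fun t ht => hineq s hs t ht.1) ρ hρ
    calc u (s + ρ) ≤ C₂ * u s * exp (C₁ * ρ) := this
      _ ≤ C₂ * u s * exp C₁ := by
        gcongr
        exacts [mul_nonneg hC₂0 (hu0 s hs), mul_le_of_le_one_right hC₁0 hρ.2]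
      _ = C₂ * exp C₁ * u s := by ring
  have hint : ∫ ρ in 0..r, u (s + ρ) ≤ r * (C₂ * exp C₁ * u s) := by
    have : ∫ ρ in 0..r, u (s + ρ) ≤ ∫ _ in 0..r, C₂ * exp C₁ * u s :=
      intervalIntegral.integral_mono_on hr.1
        ((hshift.mono (Icc_subset_Icc_right hr.2)).intervalIntegrable_of_Icc hr.1)
        intervalIntegrable_const fun ρ hρ => hcrude ρ ⟨hρ.1, hρ.2.trans hr.2⟩
    rwa [intervalIntegral.integral_const, smul_eq_mul, sub_zero] at this
  calc u (s + r) ≤ a₂ r * u s + a₁ r * ∫ ρ in 0..r, u (s + ρ) := hineq s hs r hr.1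
    _ ≤ a₂ r * u s + C₁ * (r * (C₂ * exp C₁ * u s)) := by
      gcongr
      · exact intervalIntegral.integral_nonneg hr.1 fun ρ hρ => hu0 _ (add_nonneg hs hρ.1)
      · exact ha₁ r hr
    _ = (a₂ r + C₁ * (C₂ * exp C₁) * r) * u s := by ring

noncomputable def expansionFactor (a₁ a₂ : ℝ → ℝ) (K h : ℝ) : ℝ :=
  a₂ h + a₁ h * ∫ r in (0:ℝ)..h, (a₂ r + K * r)

theorem exists_add_le_expansionFactor_mul {u a₁ a₂ : ℝ → ℝ} (huc : ContinuousOn u (Ici 0))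
    (hu0 : ∀ t ≥ (0:ℝ), 0 ≤ u t) (ha₁c : ContinuousOn a₁ (Ici 0))
    (ha₁0 : ∀ t ≥ (0:ℝ), 0 ≤ a₁ t) (ha₂c : ContinuousOn a₂ (Ici 0))
    (hineq : ∀ s ≥ (0:ℝ), ∀ t ≥ (0:ℝ),
      u (s + t) ≤ a₂ t * u s + a₁ t * ∫ r in (0:ℝ)..t, u (s + r)) :
    ∃ K, ∀ s ≥ (0:ℝ), ∀ h ∈ Icc (0:ℝ) 1, u (s + h) ≤ expansionFactor a₁ a₂ K h * u s := by
  obtain ⟨K, hK⟩ := exists_add_le_add_mul_mul huc hu0 ha₁c ha₂c hineq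
  refine ⟨K, fun s hs h hh => ?_⟩
  have hint : ∫ r in 0..h, u (s + r) ≤ (∫ r in 0..h, (a₂ r + K * r)) * u s := by
    rw [← intervalIntegral.integral_mul_const]
    refine intervalIntegral.integral_mono_on hh.1 ?_ ?_
      fun r hr => hK s hs r ⟨hr.1, hr.2.trans hh.2⟩
    · exact ((huc.comp_const_add_Ici hs).mono Icc_subset_Ici_self).intervalIntegrable_of_Icc hh.1
    · exact (((ha₂c.mono Icc_subset_Ici_self).add (continuousOn_const.mul continuousOn_id)).mul
        continuousOn_const).intervalIntegrable_of_Icc hh.1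
  calc u (s + h) ≤ a₂ h * u s + a₁ h * ∫ r in 0..h, u (s + r) := hineq s hs h hh.1
    _ ≤ a₂ h * u s + a₁ h * ((∫ r in 0..h, (a₂ r + K * r)) * u s) := by
      gcongr
      exact ha₁0 h hh.1
    _ = expansionFactor a₁ a₂ K h * u s := by rw [expansionFactor]; ring

theorem hasDerivWithinAt_expansionFactor {a₁ a₂ : ℝ → ℝ} {a₂' : ℝ}
    (ha₁c : ContinuousWithinAt a₁ (Ici 0) 0) (ha₂c : ContinuousOn a₂ (Ici 0))
    (ha₂init : a₂ 0 = 1) (ha₂d : HasDerivWithinAt a₂ a₂' (Ici 0) 0) (K : ℝ) :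
    HasDerivWithinAt (expansionFactor a₁ a₂ K) (a₂' + a₁ 0) (Ici 0) 0 := by
  have hJ : HasDerivWithinAt (fun h => ∫ r in (0:ℝ)..h, (a₂ r + K * r)) (a₂ 0 + K * 0)
      (Ici 0) 0 :=
    ContinuousOn.hasDerivWithinAt_integral_Icc
      ((ha₂c.mono Icc_subset_Ici_self).add (continuousOn_const.mul continuousOn_id))
      (left_mem_Icc.2 zero_le_one) |>.mono_of_mem_nhdsWithin (Icc_mem_nhdsGE one_pos)
  have := ha₂d.add (hJ.mul_of_eq_zero (by simp) ha₁c)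
  rwa [ha₂init, mul_zero, add_zero, mul_one] at this

theorem expansion_lemma_general (u a₁ a₂ : ℝ → ℝ) (a₂' : ℝ)
    (huc : ContinuousOn u (Set.Ici 0)) (hu0 : ∀ t ≥ (0:ℝ), 0 ≤ u t)
    (ha₁c : ContinuousOn a₁ (Set.Ici 0)) (ha₁0 : ∀ t ≥ (0:ℝ), 0 ≤ a₁ t)
    (ha₂c : ContinuousOn a₂ (Set.Ici 0))
    (ha₂init : a₂ 0 = 1) (ha₂d : HasDerivWithinAt a₂ a₂' (Set.Ici 0) 0)
    (hineq : ∀ s ≥ (0:ℝ), ∀ t ≥ (0:ℝ),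
      u (s + t) ≤ a₂ t * u s + a₁ t * ∫ r in (0:ℝ)..t, u (s + r)) :
    ∀ t ≥ (0:ℝ), u t ≤ Real.exp ((a₂' + a₁ 0) * t) * u 0 := by
  intro t ht
  obtain ⟨K, hK⟩ := exists_add_le_expansionFactor_mul huc hu0 ha₁c ha₁0 ha₂c hineq
  refine le_exp_mul_of_eventually_add_le_mul (by simp [expansionFactor, ha₂init])
    (hasDerivWithinAt_expansionFactor (ha₁c 0 self_mem_Ici) ha₂c ha₂init ha₂d K) ?_ ht
  filter_upwards [Icc_mem_nhdsGE one_pos] with h hh s hs using hK s hs h hh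

/-- Expansion lemma: if a nonnegative continuous `u` on `[0,∞)` satisfies
`u (s+t) ≤ a₂ t * u s + a₁ t * ∫₀^t u (s+r) dr` for all `s, t ≥ 0`, where `a₁ ≥ 0` is
continuous, `a₂ ≥ 0` is continuous with `a₂ 0 = 1` and right-differentiable at `0`, then
`u t ≤ e^{(a₂'(0) + a₁ 0) t} u 0` for all `t ≥ 0`. -/
theorem expansion_lemma (u a₁ a₂ : ℝ → ℝ) (a₂' : ℝ)
    (huc : ContinuousOn u (Set.Ici 0)) (hu0 : ∀ t ≥ (0:ℝ), 0 ≤ u t)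
    (ha₁c : ContinuousOn a₁ (Set.Ici 0)) (ha₁0 : ∀ t ≥ (0:ℝ), 0 ≤ a₁ t)
    (ha₂c : ContinuousOn a₂ (Set.Ici 0)) (ha₂0 : ∀ t ≥ (0:ℝ), 0 ≤ a₂ t)
    (ha₂init : a₂ 0 = 1) (ha₂d : HasDerivWithinAt a₂ a₂' (Set.Ici 0) 0)
    (hineq : ∀ s ≥ (0:ℝ), ∀ t ≥ (0:ℝ),
      u (s + t) ≤ a₂ t * u s + a₁ t * ∫ r in (0:ℝ)..t, u (s + r)) :
    ∀ t ≥ (0:ℝ), u t ≤ Real.exp ((a₂' + a₁ 0) * t) * u 0 :=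
  expansion_lemma_general u a₁ a₂ a₂' huc hu0 ha₁c ha₁0 ha₂c ha₂init ha₂d hineq
end

section
/- Let 0 < a < b, c ∈ ℝ and R₀ ≥ 1, and let r : ℝ → ℝ satisfy r(z) ≥ (7b+a)/8 for all z ≥ R₀ and r(z) ≤ (b+7a)/8 for all z ≤ −R₀. Define φ : ℝ → [0,1] by φ(s) = 1 for s ≥ 1, φ(s) = 0 for s ≤ −1, φ(s) = (1+sin(πs/2))/2 for s ∈ [−1,1]; define h : ℝ → ℝ by h(s) = |s| for |s| ≥ 1 and h(s) = (s²+1)/2 for |s| ≤ 1; and set V(x,y) = e^{((b−a)/4) h(x)} ( (5a+3b)/(2(b−a)) + φ(yx) ) for x ∈ ℝ, y ∈ {−1,1}. Then for every x ∈ ℝ and y ∈ {−1,1} with |x| ≥ R₀ + |c|, the function x ↦ V(x,y) is differentiable at x and y · ∂ₓV(x,y) + r(y(x−c)) (V(x,−y) − V(x,y)) ≤ −((b−a)²/(10(a+b))) · V(x,y). -/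
/-!
On `|s| ≥ 1` the smoothed absolute value `h` has derivative `sign s` and `φ` is locally constant,
so `y ∂ₓV(x,y) = ±((b-a)/4) V(x,y)` with the sign of `s = y x`. Moving outward (`s ≥ 1`),
the exponential weight grows at rate `(b-a)/4`, but the particle tumbles at rate at least
`(7b+a)/8` and a tumble drops `φ` from `1` to `0`. Moving inward (`s ≤ -1`), the weight decays at
rate `(b-a)/4` and the tumbling rate, at most `(b+7a)/8`, can only raise `φ` from `0` to `1`.
Away from `|x| ≤ R₀ + |c|` the sign of `y (x - c)` is that of `s`, so one of the two cases
applies.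
-/

/-- The interpolation function `φ`: `φ s = 1` for `s ≥ 1`, `φ s = 0` for `s ≤ -1`, and
`φ s = (1 + sin(πs/2))/2` for `s ∈ [-1,1]`. -/
noncomputable def phi (s : ℝ) : ℝ :=
  if 1 ≤ s then 1 else if s ≤ -1 then 0 else (1 + Real.sin (Real.pi * s / 2)) / 2

/-- The smoothed absolute value `h`: `h s = |s|` for `|s| ≥ 1` and `h s = (s²+1)/2` for
`|s| ≤ 1`. -/
noncomputable def hfun (s : ℝ) : ℝ :=
  if 1 ≤ |s| then |s| else (s ^ 2 + 1) / 2

/-- The Lyapunov function `V(x,y) = e^{((b-a)/4) h(x)} ((5a+3b)/(2(b-a)) + φ(yx))` for the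
run-and-tumble process. -/
noncomputable def Vrtp (a b x y : ℝ) : ℝ :=
  Real.exp ((b - a) / 4 * hfun x) * ((5 * a + 3 * b) / (2 * (b - a)) + phi (y * x))

open Real Set Filter Topology

theorem hasDerivAt_of_eventuallyEq_nhdsLE_nhdsGE {F : Type*} [NormedAddCommGroup F]
    [NormedSpace ℝ F] {f g₁ g₂ : ℝ → F} {d : F} {x : ℝ}
    (h₁ : HasDerivAt g₁ d x) (h₂ : HasDerivAt g₂ d x)
    (hf₁ : f =ᶠ[𝓝[≤] x] g₁) (hf₂ : f =ᶠ[𝓝[≥] x] g₂) : HasDerivAt f d x := by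
  rw [← hasDerivWithinAt_univ, ← Iic_union_Ici (a := x)]
  exact (h₁.hasDerivWithinAt.congr_of_eventuallyEq_of_mem hf₁ (mem_Iic.2 le_rfl)).union
    (h₂.hasDerivWithinAt.congr_of_eventuallyEq_of_mem hf₂ (mem_Ici.2 le_rfl))

lemma phi_of_one_le {s : ℝ} (hs : 1 ≤ s) : phi s = 1 := if_pos hs

lemma phi_of_le_neg_one {s : ℝ} (hs : s ≤ -1) : phi s = 0 := by
  rw [phi, if_neg (by linarith), if_pos hs]

lemma phi_neg (s : ℝ) : phi (-s) = 1 - phi s := by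
  unfold phi
  split_ifs <;> first | linarith | (rw [mul_neg, neg_div, sin_neg]; ring)

lemma hasDerivAt_phi_of_one_le {s : ℝ} (hs : 1 ≤ s) : HasDerivAt phi 0 s := by
  have hright : phi =ᶠ[𝓝[≥] s] fun _ => 1 :=
    eventually_nhdsWithin_of_forall fun t ht => phi_of_one_le (hs.trans ht)
  rcases hs.eq_or_lt with rfl | hs
  · have hsin : HasDerivAt (fun t => (1 + sin (π * t / 2)) / 2) 0 1 := by
      refine ((((hasDerivAt_id (1 : ℝ)).const_mul π).div_const 2).sin.const_add 1).div_const 2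
        |>.congr_deriv ?_
      simp
    refine hasDerivAt_of_eventuallyEq_nhdsLE_nhdsGE hsin (hasDerivAt_const _ _) ?_ hright
    filter_upwards [Ioc_mem_nhdsLE (show (0 : ℝ) < 1 by norm_num)] with t ⟨ht₁, ht₂⟩
    rcases ht₂.eq_or_lt with rfl | ht₂
    · simp [phi]
    · rw [phi, if_neg ht₂.not_ge, if_neg (by linarith)]
  · exact (hasDerivAt_const s 1).congr_of_eventuallyEq <|
      eventually_of_mem (Ioi_mem_nhds hs) fun t ht => phi_of_one_le ht.le

lemma hasDerivAt_phi_of_one_le_abs {s : ℝ} (hs : 1 ≤ |s|) : HasDerivAt phi 0 s := by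
  rcases le_abs'.mp hs with hs | hs
  · have hphi : phi = fun t => 1 - phi (-t) := funext fun t => by rw [phi_neg]; ring
    rw [hphi]
    simpa using ((hasDerivAt_phi_of_one_le (le_neg.mpr hs)).comp s (hasDerivAt_neg s)).const_sub 1
  · exact hasDerivAt_phi_of_one_le hs

lemma hfun_neg (s : ℝ) : hfun (-s) = hfun s := by
  simp only [hfun, abs_neg, neg_sq]

lemma hfun_of_one_le {s : ℝ} (hs : 1 ≤ s) : hfun s = s := by
  rw [hfun, abs_of_nonneg (by linarith), if_pos hs]

lemma hasDerivAt_hfun_of_one_le {s : ℝ} (hs : 1 ≤ s) : HasDerivAt hfun 1 s := by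
  have hright : hfun =ᶠ[𝓝[≥] s] id :=
    eventually_nhdsWithin_of_forall fun t ht => hfun_of_one_le (hs.trans ht)
  rcases hs.eq_or_lt with rfl | hs
  · have hsq : HasDerivAt (fun t : ℝ => (t ^ 2 + 1) / 2) 1 1 := by
      refine ((hasDerivAt_pow 2 (1 : ℝ)).add_const 1).div_const 2 |>.congr_deriv ?_
      norm_num
    refine hasDerivAt_of_eventuallyEq_nhdsLE_nhdsGE hsq (hasDerivAt_id 1) ?_ hright
    filter_upwards [Ioc_mem_nhdsLE (show (0 : ℝ) < 1 by norm_num)] with t ⟨ht₁, ht₂⟩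
    rcases ht₂.eq_or_lt with rfl | ht₂
    · norm_num [hfun]
    · rw [hfun, abs_of_pos ht₁, if_neg ht₂.not_ge]
  · exact (hasDerivAt_id s).congr_of_eventuallyEq <|
      eventually_of_mem (Ioi_mem_nhds hs) fun t ht => hfun_of_one_le ht.le

lemma hasDerivAt_hfun_of_one_le_mul {x y : ℝ} (hy : y = 1 ∨ y = -1) (hyx : 1 ≤ y * x) :
    HasDerivAt hfun y x := by
  rcases hy with rfl | rfl
  · exact hasDerivAt_hfun_of_one_le (by simpa using hyx)
  · have h := (hasDerivAt_hfun_of_one_le (by simpa using hyx)).comp x (hasDerivAt_neg x)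
    rwa [mul_neg_one, show hfun ∘ Neg.neg = hfun from funext hfun_neg] at h

lemma hasDerivAt_Vrtp {a b x y σ : ℝ} (hσ : HasDerivAt hfun σ x) (hyx : 1 ≤ |y * x|) :
    HasDerivAt (fun z => Vrtp a b z y) ((b - a) / 4 * σ * Vrtp a b x y) x := by
  have hphi : HasDerivAt (fun z => phi (y * z)) 0 x := by
    have h := (hasDerivAt_phi_of_one_le_abs hyx).comp x ((hasDerivAt_id x).const_mul y)
    rwa [zero_mul] at h
  refine ((hσ.const_mul ((b - a) / 4)).exp.mul (hphi.const_add _)).congr_deriv ?_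
  rw [Vrtp]
  ring

/- With `k = (b-a)/4` and `C = (5a+3b)/(2(b-a))` one has `k (C+1) = (3a+5b)/8` and
`k C = (5a+3b)/8`: both lie `(b-a)/4` inside the rate bounds, which absorbs the `ρ`-terms. -/
lemma rtp_outward_rate_bound {a b : ℝ} (ha : 0 < a) (hab : a < b) :
    ((b - a) / 4 + (b - a) ^ 2 / (10 * (a + b))) * ((5 * a + 3 * b) / (2 * (b - a)) + 1) ≤
      (7 * b + a) / 8 := by
  have hba : 0 < b - a := sub_pos.mpr hab
  have hab' : 0 < a + b := by linarith
  rw [← sub_nonneg]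
  have e : (7 * b + a) / 8 - ((b - a) / 4 + (b - a) ^ 2 / (10 * (a + b))) *
      ((5 * a + 3 * b) / (2 * (b - a)) + 1) = (b - a) * a / (10 * (a + b)) := by
    field_simp
    ring
  rw [e]
  positivity

lemma rtp_inward_rate_bound {a b : ℝ} (ha : 0 < a) (hab : a < b) :
    (b + 7 * a) / 8 ≤
      ((b - a) / 4 - (b - a) ^ 2 / (10 * (a + b))) * ((5 * a + 3 * b) / (2 * (b - a))) := by
  have hba : 0 < b - a := sub_pos.mpr hab
  have hab' : 0 < a + b := by linarith
  rw [← sub_nonneg]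
  have e : ((b - a) / 4 - (b - a) ^ 2 / (10 * (a + b))) * ((5 * a + 3 * b) / (2 * (b - a))) -
      (b + 7 * a) / 8 = (b - a) * b / (10 * (a + b)) := by
    field_simp
    ring
  rw [e]
  have hb : 0 < b := ha.trans hab
  positivity

lemma rtp_drift_outward {a b R x y : ℝ} (ha : 0 < a) (hab : a < b)
    (hy : y = 1 ∨ y = -1) (hyx : 1 ≤ y * x) (hR : (7 * b + a) / 8 ≤ R) :
    ∃ d : ℝ, HasDerivAt (fun z => Vrtp a b z y) d x ∧
      y * d + R * (Vrtp a b x (-y) - Vrtp a b x y) ≤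
        -((b - a) ^ 2 / (10 * (a + b))) * Vrtp a b x y := by
  refine ⟨_, hasDerivAt_Vrtp (hasDerivAt_hfun_of_one_le_mul hy hyx) (hyx.trans (le_abs_self _)),
    ?_⟩
  have hyy : y * y = 1 := by rcases hy with rfl | rfl <;> norm_num
  set E := exp ((b - a) / 4 * hfun x)
  set C := (5 * a + 3 * b) / (2 * (b - a))
  have hV : Vrtp a b x y = E * (C + 1) := by rw [Vrtp, phi_of_one_le hyx]
  have hV' : Vrtp a b x (-y) = E * C := by
    rw [Vrtp, neg_mul, phi_of_le_neg_one (by linarith), add_zero]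
  have hrate := mul_le_mul_of_nonneg_left ((rtp_outward_rate_bound ha hab).trans hR)
    (exp_pos _).le (a := E)
  rw [hV, hV']
  linear_combination hrate + (b - a) / 4 * E * (C + 1) * hyy

lemma rtp_drift_inward {a b R x y : ℝ} (ha : 0 < a) (hab : a < b)
    (hy : y = 1 ∨ y = -1) (hyx : y * x ≤ -1) (hR : R ≤ (b + 7 * a) / 8) :
    ∃ d : ℝ, HasDerivAt (fun z => Vrtp a b z y) d x ∧
      y * d + R * (Vrtp a b x (-y) - Vrtp a b x y) ≤
        -((b - a) ^ 2 / (10 * (a + b))) * Vrtp a b x y := by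
  have hy' : -y = 1 ∨ -y = -1 := by rcases hy with rfl | rfl <;> norm_num
  have hσ := hasDerivAt_hfun_of_one_le_mul (x := x) hy' (by rw [neg_mul]; linarith)
  refine ⟨_, hasDerivAt_Vrtp hσ (by rw [abs_of_neg (by linarith)]; linarith), ?_⟩
  have hyy : y * y = 1 := by rcases hy with rfl | rfl <;> norm_num
  set E := exp ((b - a) / 4 * hfun x)
  set C := (5 * a + 3 * b) / (2 * (b - a))
  have hV : Vrtp a b x y = E * C := by rw [Vrtp, phi_of_le_neg_one hyx, add_zero]
  have hV' : Vrtp a b x (-y) = E * (C + 1) := by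
    rw [Vrtp, neg_mul, phi_of_one_le (by linarith)]
  have hrate := mul_le_mul_of_nonneg_left (hR.trans (rtp_inward_rate_bound ha hab))
    (exp_pos _).le (a := E)
  rw [hV, hV']
  linear_combination hrate - (b - a) / 4 * E * C * hyy

/-- Lyapunov drift inequality for the run-and-tumble process: away from the compact set
`{|x| ≤ R₀ + |c|}`, `y ∂ₓV(x,y) + r(y(x-c))(V(x,-y) - V(x,y)) ≤ -((b-a)²/(10(a+b))) V(x,y)`. -/
theorem rtp_lyapunov_drift (a b c R₀ : ℝ) (ha : 0 < a) (hab : a < b) (hR₀ : 1 ≤ R₀)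
    (r : ℝ → ℝ)
    (hr_plus : ∀ z, R₀ ≤ z → (7 * b + a) / 8 ≤ r z)
    (hr_minus : ∀ z, z ≤ -R₀ → r z ≤ (b + 7 * a) / 8)
    (x y : ℝ) (hy : y = 1 ∨ y = -1) (hx : R₀ + |c| ≤ |x|) :
    ∃ d : ℝ, HasDerivAt (fun z => Vrtp a b z y) d x ∧
      y * d + r (y * (x - c)) * (Vrtp a b x (-y) - Vrtp a b x y) ≤
        -((b - a) ^ 2 / (10 * (a + b))) * Vrtp a b x y := by
  have hy_abs : |y| = 1 := by rcases hy with rfl | rfl <;> simp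
  have hyc : |y * c| = |c| := by rw [abs_mul, hy_abs, one_mul]
  have hyx : R₀ + |c| ≤ |y * x| := by rwa [abs_mul, hy_abs, one_mul]
  rcases le_abs'.mp hyx with hyx | hyx
  · refine rtp_drift_inward ha hab hy (by linarith [abs_nonneg c]) (hr_minus _ ?_)
    linarith [mul_sub y x c, neg_abs_le (y * c)]
  · refine rtp_drift_outward ha hab hy (by linarith [abs_nonneg c]) (hr_plus _ ?_)
    linarith [mul_sub y x c, le_abs_self (y * c)]
end

section
/- Let ρ > 0, R ≥ 0, let g₁, g₂ : [0,∞) → [0,∞) be measurable with g₁(x) ≥ 2ρ for all x ≥ R, and let ν be a probability measure on [0,∞) such that ∫ g₂(x+y) dν(y) < ∞ for all x ≥ 0. Define λ(x) = 1 + g₁(x) + ∫₀^∞ g₂(x+y) dν(y) and V(x) = e^{ρx}. Then for all x ≥ 0, ρ V(x) + λ(x) (V(x/2) − V(x)) ≤ −(1/2) V(x) + (1/2)(1+2ρ)(1 + e^{ρR}). In particular, for x ≥ R one has ρ V(x) + λ(x)(V(x/2) − V(x)) ≤ −(1/2) V(x) + 1/2 + ρ. -/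
/-!
Write `s = e^{ρx/2}`, so that `V(x) = s²` and `V(x/2) = s ≥ 1`. Once the jump rate is at least
`1 + 2ρ` (which `g₁ ≥ 2ρ` guarantees beyond `R`), the drift is at most
`ρs² + (1 + 2ρ)(s - s²)`, and this lies below `-s²/2 + 1/2 + ρ` by `(1/2 + ρ)(s - 1)² ≥ 0`.
On `[0, R]` the jump term is nonpositive, so the drift is at most `ρ e^{ρR}`.
-/

open MeasureTheory Real

/-- The generator `f ↦ f' + λ (f(·/2) - f)` of the TCP process, with jump rate `λ = l`,
applied to `V(x) = e^{ρx}`. -/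
noncomputable def expDrift (ρ l x : ℝ) : ℝ :=
  ρ * exp (ρ * x) + l * (exp (ρ * (x / 2)) - exp (ρ * x))

lemma expDrift_le_of_one_add_two_mul_le {ρ l x : ℝ} (hρ : 0 ≤ ρ) (hx : 0 ≤ x)
    (hl : 1 + 2 * ρ ≤ l) : expDrift ρ l x ≤ -(1 / 2) * exp (ρ * x) + 1 / 2 + ρ := by
  have hsq : exp (ρ * x) = exp (ρ * (x / 2)) ^ 2 := by
    rw [← exp_nat_mul]; ring_nf
  set s := exp (ρ * (x / 2))
  have hs : 1 ≤ s := one_le_exp (by positivity)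
  have hjump : l * (s - s ^ 2) ≤ (1 + 2 * ρ) * (s - s ^ 2) :=
    mul_le_mul_of_nonpos_right hl (by nlinarith)
  rw [expDrift, hsq]
  linarith [mul_nonneg hρ (sq_nonneg (s - 1)), sq_nonneg (s - 1)]

lemma expDrift_le_of_le {ρ l x R : ℝ} (hρ : 0 ≤ ρ) (hl : 0 ≤ l) (hx : 0 ≤ x) (hxR : x ≤ R) :
    expDrift ρ l x ≤ ρ * exp (ρ * R) := by
  have hjump : l * (exp (ρ * (x / 2)) - exp (ρ * x)) ≤ 0 :=
    mul_nonpos_of_nonneg_of_nonpos hl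
      (sub_nonpos.mpr (exp_le_exp.mpr (by nlinarith)))
  have hV : ρ * exp (ρ * x) ≤ ρ * exp (ρ * R) :=
    mul_le_mul_of_nonneg_left (exp_le_exp.mpr (by nlinarith)) hρ
  rw [expDrift]
  linarith

lemma integral_comp_add_nonneg {ν : Measure ℝ} (hν : ν (Set.Iio 0) = 0) {g : ℝ → ℝ}
    (hg : ∀ z ≥ (0 : ℝ), 0 ≤ g z) {x : ℝ} (hx : 0 ≤ x) : 0 ≤ ∫ y, g (x + y) ∂ν := by
  refine integral_nonneg_of_ae ?_
  filter_upwards [measure_eq_zero_iff_ae_notMem.mp hν] with y hy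
  exact hg _ (add_nonneg hx (not_lt.mp hy))

theorem tcp_lyapunov_drift_general (ρ R : ℝ) (hρ : 0 < ρ) (hR : 0 ≤ R)
    (g₁ g₂ : ℝ → ℝ)
    (hg₁0 : ∀ x ≥ (0:ℝ), 0 ≤ g₁ x) (hg₂0 : ∀ x ≥ (0:ℝ), 0 ≤ g₂ x)
    (hg₁R : ∀ x ≥ R, 2 * ρ ≤ g₁ x)
    (ν : Measure ℝ) (hν : ν (Set.Iio 0) = 0) :
    (∀ x ≥ (0:ℝ),
        ρ * Real.exp (ρ * x) +
            (1 + g₁ x + ∫ y, g₂ (x + y) ∂ν) *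
              (Real.exp (ρ * (x / 2)) - Real.exp (ρ * x)) ≤
          -(1 / 2) * Real.exp (ρ * x) +
            (1 / 2) * (1 + 2 * ρ) * (1 + Real.exp (ρ * R))) ∧
      (∀ x ≥ R,
        ρ * Real.exp (ρ * x) +
            (1 + g₁ x + ∫ y, g₂ (x + y) ∂ν) *
              (Real.exp (ρ * (x / 2)) - Real.exp (ρ * x)) ≤
          -(1 / 2) * Real.exp (ρ * x) + 1 / 2 + ρ) := by
  have far : ∀ x ≥ R, expDrift ρ (1 + g₁ x + ∫ y, g₂ (x + y) ∂ν) x ≤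
      -(1 / 2) * exp (ρ * x) + 1 / 2 + ρ := fun x hx =>
    expDrift_le_of_one_add_two_mul_le hρ.le (hR.trans hx)
      (by linarith [hg₁R x hx, integral_comp_add_nonneg hν hg₂0 (hR.trans hx)])
  refine ⟨fun x hx => ?_, far⟩
  change expDrift ρ (1 + g₁ x + ∫ y, g₂ (x + y) ∂ν) x ≤ _
  have hVR_pos : 0 < exp (ρ * R) := exp_pos _
  have hρVR_pos : 0 < ρ * exp (ρ * R) := by positivity
  rcases le_or_gt R x with hxR | hxR
  · linarith [far x hxR]
  · have near : expDrift ρ (1 + g₁ x + ∫ y, g₂ (x + y) ∂ν) x ≤ ρ * exp (ρ * R) :=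
      expDrift_le_of_le hρ.le
        (by linarith [hg₁0 x hx, integral_comp_add_nonneg hν hg₂0 hx]) hx hxR.le
    have hVR : exp (ρ * x) ≤ exp (ρ * R) := exp_le_exp.mpr (by nlinarith)
    linarith

/-- Lyapunov drift inequality for the mean-field TCP process: with jump rate
`λ(x) = 1 + g₁(x) + ∫ g₂(x+y) dν(y)` and `V(x) = e^{ρx}`, for all `x ≥ 0`
`ρ V(x) + λ(x)(V(x/2) - V(x)) ≤ -(1/2) V(x) + (1/2)(1+2ρ)(1+e^{ρR})`, and for
all `x ≥ R`, `ρ V(x) + λ(x)(V(x/2) - V(x)) ≤ -(1/2) V(x) + 1/2 + ρ`. -/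
theorem tcp_lyapunov_drift (ρ R : ℝ) (hρ : 0 < ρ) (hR : 0 ≤ R)
    (g₁ g₂ : ℝ → ℝ) (hg₁m : Measurable g₁) (hg₂m : Measurable g₂)
    (hg₁0 : ∀ x ≥ (0:ℝ), 0 ≤ g₁ x) (hg₂0 : ∀ x ≥ (0:ℝ), 0 ≤ g₂ x)
    (hg₁R : ∀ x ≥ R, 2 * ρ ≤ g₁ x)
    (ν : Measure ℝ) [IsProbabilityMeasure ν] (hν : ν (Set.Iio 0) = 0)
    (hint : ∀ x ≥ (0:ℝ), Integrable (fun y => g₂ (x + y)) ν) :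
    (∀ x ≥ (0:ℝ),
        ρ * Real.exp (ρ * x) +
            (1 + g₁ x + ∫ y, g₂ (x + y) ∂ν) *
              (Real.exp (ρ * (x / 2)) - Real.exp (ρ * x)) ≤
          -(1 / 2) * Real.exp (ρ * x) +
            (1 / 2) * (1 + 2 * ρ) * (1 + Real.exp (ρ * R))) ∧
      (∀ x ≥ R,
        ρ * Real.exp (ρ * x) +
            (1 + g₁ x + ∫ y, g₂ (x + y) ∂ν) *
              (Real.exp (ρ * (x / 2)) - Real.exp (ρ * x)) ≤
          -(1 / 2) * Real.exp (ρ * x) + 1 / 2 + ρ) :=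
  tcp_lyapunov_drift_general ρ R hρ hR g₁ g₂ hg₁0 hg₂0 hg₁R ν hν
end
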